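/- arXiv:1402.0229 — 8 statements merged into one kernel-verified Lean document; each statement's English description precedes it below -/
import Mathlib

section
/- Let n ≥ 1 and let x_1,…,x_n, y_1,…,y_n, t be indeterminates. Then Σ_λ ∏_{i=1}^{n} (1 − t^{λ_i−i+n+1}) · s_λ(x_1,…,x_n) · s_λ(y_1,…,y_n) = (Δ(x)_n Δ(y)_n)^{-1} · det[ (1−t) / ((1−x_i y_j)(1−t x_i y_j)) ]_{1≤i,j≤n}, where the sum is over all partitions λ with ℓ(λ) ≤ n. -/
/-!
Expand every entry as `(1 - t) / ((1 - z) (1 - t z)) = ∑ₖ (1 - t^(k+1)) zᵏ` with `z = xᵢ yⱼ`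
and the determinant multilinearly in its columns:
`det = ∑_{k : Fin n → ℕ} ∏ⱼ (1 - t^(kⱼ+1)) yⱼ^kⱼ · det[xᵢ^kⱼ]`.
The alternant `det[xᵢ^kⱼ]` vanishes unless `k` is injective, and an injective `k` is uniquely
`(λ + δ) ∘ σ` with `λ` a partition and `σ` a permutation. For fixed `λ`, the sum over `σ`
collects the signs that turn `∏ⱼ yⱼ^kⱼ` into the second alternant `det[yᵢ^(λⱼ+δⱼ)]`;
dividing both alternants by the Vandermonde products gives the Schur polynomials.
-/

noncomputable section

open scoped BigOperators

/-- The Vandermonde product `Δ(x)ₙ = ∏_{i<j} (x i - x j)`. -/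
def vprod {n : ℕ} (x : Fin n → ℂ) : ℂ :=
  ∏ i : Fin n, ∏ j ∈ Finset.Ioi i, (x i - x j)

/-- The Schur polynomial `s_λ(x₁,…,xₙ) = det[xᵢ^{λⱼ - j + n}]/Δ(x)ₙ`, for a partition `λ`
with at most `n` parts recorded as an antitone function `l : Fin n → ℕ` (0-indexed, so the
exponent is `l j + (n - 1 - j)`). -/
def schurPoly {n : ℕ} (l : Fin n → ℕ) (x : Fin n → ℂ) : ℂ :=
  (Matrix.of fun i j : Fin n => x i ^ (l j + (n - 1 - (j : ℕ)))).det / vprod x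

open Finset Matrix

section SeriesProducts

variable {R ι : Type*} [NormedCommRing R] [CompleteSpace R]

theorem summable_norm_and_hasSum_prod_tsum {m : ℕ} (f : Fin m → ι → R)
    (hf : ∀ i, Summable fun k => ‖f i k‖) :
    (Summable fun k : Fin m → ι => ‖∏ i, f i (k i)‖) ∧
      HasSum (fun k : Fin m → ι => ∏ i, f i (k i)) (∏ i, ∑' k, f i k) := by
  induction m with
  | zero =>
    simpa using And.intro (hasSum_fintype fun _ : Fin 0 → ι => ‖(1 : R)‖).summable
      (hasSum_fintype fun _ : Fin 0 → ι => (1 : R))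
  | succ m ih =>
    obtain ⟨ih_norm, ih_sum⟩ := ih (fun i => f i.succ) fun i => hf i.succ
    have hsplit (p : ι × (Fin m → ι)) :
        ∏ i, f i (Fin.consEquiv (fun _ => ι) p i) = f 0 p.1 * ∏ i : Fin m, f i.succ (p.2 i) := by
      simp [Fin.consEquiv, Fin.prod_univ_succ]
    rw [← (Fin.consEquiv fun _ => ι).summable_iff, ← (Fin.consEquiv fun _ => ι).hasSum_iff,
      Function.comp_def, Function.comp_def, Fin.prod_univ_succ]
    simp only [hsplit]
    have h0 : HasSum (f 0) (∑' k, f 0 k) := (hf 0).of_norm.hasSum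
    have hprod := summable_mul_of_summable_norm (hf 0) ih_norm
    have hmul := h0.mul ih_sum hprod
    have hbound : Summable fun p : ι × (Fin m → ι) => ‖f 0 p.1‖ * ‖∏ i : Fin m, f i.succ (p.2 i)‖ :=
      (hf 0).mul_of_nonneg ih_norm (fun _ => norm_nonneg _) fun _ => norm_nonneg _
    exact ⟨hbound.of_nonneg_of_le (fun _ => norm_nonneg _) fun _ => norm_mul_le _ _,
      hmul⟩

end SeriesProducts

theorem hasSum_one_sub_pow_succ_mul_pow {K : Type*} [NormedField K] [CompleteSpace K] {z t : K}
    (hz : ‖z‖ < 1) (ht : ‖t‖ ≤ 1) :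
    HasSum (fun k : ℕ => (1 - t ^ (k + 1)) * z ^ k) ((1 - t) / ((1 - z) * (1 - t * z))) := by
  have htz : ‖t * z‖ < 1 := by
    rw [norm_mul]
    exact lt_of_le_of_lt (mul_le_of_le_one_left (norm_nonneg z) ht) hz
  have hz₁ : 1 - z ≠ 0 := sub_ne_zero.2 fun h => by simp [← h] at hz
  have htz₁ : 1 - t * z ≠ 0 := sub_ne_zero.2 fun h => by simp [← h] at htz
  have hval : (1 - t) / ((1 - z) * (1 - t * z)) = (1 - z)⁻¹ - t * (1 - t * z)⁻¹ := by
    field_simp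
    ring
  have hterm : (fun k : ℕ => (1 - t ^ (k + 1)) * z ^ k) = fun k => z ^ k - t * (t * z) ^ k := by
    funext k
    ring
  rw [hval, hterm]
  exact (hasSum_geometric_of_norm_lt_one hz).sub ((hasSum_geometric_of_norm_lt_one htz).mul_left t)

theorem summable_norm_one_sub_pow_succ_mul_pow {K : Type*} [NormedField K] {z t : K}
    (hz : ‖z‖ < 1) (ht : ‖t‖ ≤ 1) :
    Summable fun k : ℕ => ‖(1 - t ^ (k + 1)) * z ^ k‖ := by
  refine .of_nonneg_of_le (fun k => norm_nonneg _) (fun k => ?_)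
    ((summable_geometric_of_lt_one (norm_nonneg z) hz).mul_left 2)
  rw [norm_mul, norm_pow]
  gcongr
  calc ‖1 - t ^ (k + 1)‖ ≤ ‖(1 : K)‖ + ‖t‖ ^ (k + 1) := by
        rw [← norm_pow]; exact norm_sub_le _ _
    _ ≤ 2 := by
        rw [norm_one]; linarith [pow_le_one₀ (norm_nonneg t) ht (n := k + 1)]

section Determinants

variable {R : Type*} {n : ℕ}

theorem hasSum_det_of_hasSum_mul_pow [NormedCommRing R] [CompleteSpace R] (c : ℕ → R)
    (x y : Fin n → R) (M : Matrix (Fin n) (Fin n) R)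
    (hM : ∀ i j, HasSum (fun k => c k * (x i * y j) ^ k) (M i j))
    (habs : ∀ i j, Summable fun k => ‖c k * (x i * y j) ^ k‖) :
    HasSum (fun k : Fin n → ℕ => (∏ j, c (k j) * y j ^ k j) * (of fun i j => x i ^ k j).det)
      M.det := by
  have hterm (σ : Equiv.Perm (Fin n)) : HasSum
      (fun k : Fin n → ℕ => (Equiv.Perm.sign σ : R) * ∏ j, c (k j) * (x (σ j) * y j) ^ k j)
      ((Equiv.Perm.sign σ : R) * ∏ j, M (σ j) j) := by
    have hprod := (summable_norm_and_hasSum_prod_tsum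
      (fun j k => c k * (x (σ j) * y j) ^ k) fun j => habs _ _).2
    simp only [fun j => (hM (σ j) j).tsum_eq] at hprod
    exact hprod.mul_left _
  rw [det_apply']
  convert hasSum_sum fun σ _ => hterm σ using 1
  funext k
  rw [det_apply', mul_sum]
  refine sum_congr rfl fun σ _ => ?_
  simp only [of_apply, mul_pow, prod_mul_distrib]
  ring

theorem sum_perm_prod_mul_det_comp_perm [CommRing R] (c : ℕ → R) (m : Fin n → ℕ)
    (x y : Fin n → R) :
    ∑ σ : Equiv.Perm (Fin n),
        (∏ j, c (m (σ j)) * y j ^ m (σ j)) * (of fun i j => x i ^ m (σ j)).det =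
      (∏ j, c (m j)) * (of fun i j => x i ^ m j).det * (of fun i j => y i ^ m j).det := by
  have hx (σ : Equiv.Perm (Fin n)) : (of fun i j => x i ^ m (σ j)).det =
      Equiv.Perm.sign σ * (of fun i j => x i ^ m j).det :=
    det_permute' σ (of fun i j => x i ^ m j)
  have hy : ∑ σ : Equiv.Perm (Fin n), (Equiv.Perm.sign σ : R) * ∏ j, y j ^ m (σ j) =
      (of fun i j => y i ^ m j).det := by
    rw [← det_transpose, det_apply']
    rfl
  simp only [hx, prod_mul_distrib]
  rw [← hy, mul_sum]
  refine sum_congr rfl fun σ _ => ?_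
  rw [Equiv.prod_comp σ fun j => c (m j)]
  ring

theorem det_of_pow_eq_zero_of_not_injective [CommRing R] (x : Fin n → R) {k : Fin n → ℕ}
    (hk : ¬Function.Injective k) : (of fun i j => x i ^ k j).det = 0 := by
  obtain ⟨j, j', hkj, hj⟩ := Function.not_injective_iff.1 hk
  exact det_zero_of_column_eq hj fun i => by simp [hkj]

end Determinants

section Staircase

variable {n : ℕ}

/-- `λ ↦ λ + δ` with the staircase `δ = (n - 1, n - 2, …, 0)`. -/
def addStaircase (l : Fin n → ℕ) : Fin n → ℕ := fun j => l j + (n - 1 - j)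

theorem addStaircase_injective : Function.Injective (addStaircase (n := n)) :=
  fun _ _ h => funext fun j => Nat.add_right_cancel (congrFun h j)

theorem addStaircase_add_one (l : Fin n → ℕ) (j : Fin n) :
    addStaircase l j + 1 = l j + (n - j) := by
  have := j.isLt
  simp only [addStaircase]
  omega

theorem Antitone.strictAnti_addStaircase {l : Fin n → ℕ} (hl : Antitone l) :
    StrictAnti (addStaircase l) := fun a b hab => by
  have hlab := hl hab.le
  have hab' : (a : ℕ) < b := hab
  have hb := b.isLt
  simp only [addStaircase]
  omega

theorem StrictAnti.antitone_add_val {m : Fin n → ℕ} (hm : StrictAnti m) :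
    Antitone fun j => m j + j := by
  cases n with
  | zero => exact fun j => j.elim0
  | succ n =>
    refine Fin.antitone_iff_succ_le.2 fun j => ?_
    have := hm j.castSucc_lt_succ
    simp only [Fin.val_succ, Fin.val_castSucc]
    omega

theorem StrictAnti.exists_antitone_addStaircase_eq {m : Fin n → ℕ} (hm : StrictAnti m) :
    ∃ l, Antitone l ∧ addStaircase l = m := by
  refine ⟨fun j => m j + j - (n - 1), fun a b hab => Nat.sub_le_sub_right
    (hm.antitone_add_val hab) _, funext fun j => ?_⟩
  have hj := j.isLt
  have hlast := hm.antitone_add_val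
    (show j ≤ ⟨n - 1, by omega⟩ from Fin.le_def.2 (Nat.le_sub_one_of_lt hj))
  simp only [addStaircase] at hlast ⊢
  omega

theorem exists_perm_strictAnti_comp {α : Type*} [LinearOrder α] {k : Fin n → α}
    (hk : Function.Injective k) : ∃ σ : Equiv.Perm (Fin n), StrictAnti (k ∘ σ) := by
  set σ := Tuple.sort (OrderDual.toDual ∘ k)
  have hσ : Monotone (OrderDual.toDual ∘ (k ∘ σ)) := Tuple.monotone_sort _
  exact ⟨σ, (monotone_toDual_comp_iff.1 hσ).strictAnti_of_injective (hk.comp σ.injective)⟩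

def shiftedExponents (p : {l : Fin n → ℕ // Antitone l} × Equiv.Perm (Fin n)) : Fin n → ℕ :=
  addStaircase p.1.1 ∘ p.2

theorem shiftedExponents_injective : Function.Injective (shiftedExponents (n := n)) := by
  rintro ⟨⟨l, hl⟩, σ⟩ ⟨⟨l', hl'⟩, σ'⟩ h
  have hrange : Set.range (addStaircase l) = Set.range (addStaircase l') := by
    simpa only [shiftedExponents, Set.range_comp, Equiv.range_eq_univ, Set.image_univ] using
      congrArg Set.range h
  have hll' : l = l' := addStaircase_injective
    ((hl.strictAnti_addStaircase.range_inj hl'.strictAnti_addStaircase).1 hrange)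
  subst hll'
  refine Prod.ext rfl (Equiv.ext fun i => hl.strictAnti_addStaircase.injective ?_)
  exact congrFun h i

theorem mem_range_shiftedExponents {k : Fin n → ℕ} (hk : Function.Injective k) :
    k ∈ Set.range (shiftedExponents (n := n)) := by
  obtain ⟨σ, hσ⟩ := exists_perm_strictAnti_comp hk
  obtain ⟨l, hl, hlk⟩ := hσ.exists_antitone_addStaircase_eq
  refine ⟨(⟨l, hl⟩, σ⁻¹), ?_⟩
  simp only [shiftedExponents, hlk]
  funext i
  simp

end Staircase

theorem refined_cauchy_schur_general (n : ℕ) (x y : Fin n → ℂ) (t : ℂ)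
    (hx : ∀ i, ‖x i‖ < 1 / (8 * n)) (hy : ∀ j, ‖y j‖ < 1 / (8 * n)) (ht : ‖t‖ < 1) :
    HasSum
      (fun l : {l : Fin n → ℕ // Antitone l} =>
        (∏ i : Fin n, (1 - t ^ (l.1 i + (n - (i : ℕ))))) * schurPoly l.1 x * schurPoly l.1 y)
      ((vprod x * vprod y)⁻¹ *
        (Matrix.of fun i j : Fin n =>
          (1 - t) / ((1 - x i * y j) * (1 - t * (x i * y j)))).det) := by
  have hnorm {z : Fin n → ℂ} (hz : ∀ i, ‖z i‖ < 1 / (8 * n)) (i : Fin n) : ‖z i‖ < 1 := by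
    have hn : (1 : ℝ) ≤ n := by exact_mod_cast i.pos
    exact (hz i).trans_le ((div_le_one (by positivity)).2 (by linarith))
  have hxy (i j : Fin n) : ‖x i * y j‖ < 1 := by
    rw [norm_mul]
    exact mul_lt_one_of_nonneg_of_lt_one_left (norm_nonneg _) (hnorm hx i) (hnorm hy j).le
  have hdet := hasSum_det_of_hasSum_mul_pow (fun k => 1 - t ^ (k + 1)) x y
    (of fun i j => (1 - t) / ((1 - x i * y j) * (1 - t * (x i * y j))))
    (fun i j => hasSum_one_sub_pow_succ_mul_pow (hxy i j) ht.le)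
    (fun i j => summable_norm_one_sub_pow_succ_mul_pow (hxy i j) ht.le)
  have hpairs := (shiftedExponents_injective.hasSum_iff fun k hk => by
    rw [det_of_pow_eq_zero_of_not_injective x (mt mem_range_shiftedExponents hk), mul_zero]).2 hdet
  have hfibers := (hpairs.prod_fiberwise fun l => hasSum_fintype _).mul_left (vprod x * vprod y)⁻¹
  convert hfibers using 1
  -- the two sides carry different (defeq) `AddCommMonoid ℂ` instances
  · rfl
  funext l
  have hfiber := sum_perm_prod_mul_det_comp_perm (fun k => 1 - t ^ (k + 1)) (addStaircase l.1) x y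
  simp only [Function.comp_apply, shiftedExponents, hfiber]
  simp only [addStaircase_add_one]
  simp only [schurPoly, addStaircase]
  ring

/-- **Refined Cauchy identity for Schur polynomials** (Theorem 1):
`Σ_λ ∏_{i=1}^n (1 - t^{λᵢ-i+n+1}) s_λ(x) s_λ(y)
  = (Δ(x)ₙ Δ(y)ₙ)⁻¹ det[(1-t)/((1-xᵢyⱼ)(1-t xᵢyⱼ))]`,
the sum being over all partitions `λ` with `ℓ(λ) ≤ n`.  It is stated here for complex
values of the variables in a domain of convergence. -/
theorem refined_cauchy_schur (n : ℕ) (hn : 1 ≤ n) (x y : Fin n → ℂ) (t : ℂ)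
    (hx : ∀ i, ‖x i‖ < 1 / (8 * n)) (hy : ∀ j, ‖y j‖ < 1 / (8 * n)) (ht : ‖t‖ < 1)
    (hxinj : Function.Injective x) (hyinj : Function.Injective y) :
    HasSum
      (fun l : {l : Fin n → ℕ // Antitone l} =>
        (∏ i : Fin n, (1 - t ^ (l.1 i + (n - (i : ℕ))))) * schurPoly l.1 x * schurPoly l.1 y)
      ((vprod x * vprod y)⁻¹ *
        (Matrix.of fun i j : Fin n =>
          (1 - t) / ((1 - x i * y j) * (1 - t * (x i * y j)))).det) :=
  refined_cauchy_schur_general n x y t hx hy ht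
end
end

section
/- Let n ≥ 1 and write ȳ_j = 1/y_j. Then Σ_λ ∏_{i=1}^{n} (1 − t^{λ_i−i+n+1}) · s_λ(x_1,…,x_n) · sp_λ(y_1,ȳ_1,…,y_n,ȳ_n) = ( ∏_{i=1}^{n} (1−t x_i^2) ) / ( Δ(x)_n Δ(y)_n ∏_{1≤i<j≤n} (1−ȳ_i ȳ_j) ) · det[ (1−t) / ((1−x_i y_j)(1−t x_i y_j)(1−x_i ȳ_j)(1−t x_i ȳ_j)) ]_{1≤i,j≤n}, where the sum is over all partitions λ with ℓ(λ) ≤ n. -/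
noncomputable section

open scoped BigOperators

/-- The symplectic character (Weyl character formula for `Sp(2n)`, with `ȳ = y⁻¹`):
`sp_λ(y₁,ȳ₁,…,yₙ,ȳₙ) = det[yᵢ^{λⱼ-j+n+1} - ȳᵢ^{λⱼ-j+n+1}] /
  (∏ᵢ (yᵢ - ȳᵢ) ∏_{i<j} (yᵢ-yⱼ)(1-ȳᵢȳⱼ))` (0-indexed exponent `l j + (n - j)`). -/
def spChar {n : ℕ} (l : Fin n → ℕ) (y : Fin n → ℂ) : ℂ :=
  (Matrix.of fun i j : Fin n =>
      y i ^ (l j + (n - (j : ℕ))) - (y i)⁻¹ ^ (l j + (n - (j : ℕ)))).det /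
    ((∏ i : Fin n, (y i - (y i)⁻¹)) *
      ∏ i : Fin n, ∏ j ∈ Finset.Ioi i, ((y i - y j) * (1 - (y i)⁻¹ * (y j)⁻¹)))

/-!
Each entry of the matrix on the right is a generating function in `xᵢ`:
`(1 - t xᵢ²)(1 - t) / ((1 - xᵢyⱼ)(1 - t xᵢyⱼ)(1 - xᵢȳⱼ)(1 - t xᵢȳⱼ)) = Σₘ xᵢ^m bⱼ(m)` with
`bⱼ(m) = (1 - t^{m+1}) (yⱼ^{m+1} - ȳⱼ^{m+1}) / (yⱼ - ȳⱼ)`, by splitting it into four geometric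
series. The matrix is thus the product of the `n × ∞` matrix `(xᵢ^m)` and the `∞ × n` matrix
`(bⱼ(m))`, and the Cauchy–Binet formula writes its determinant as the sum, over strictly
decreasing `d = λ + δ` with `δ = (n-1, …, 0)`, of `det[xᵢ^{dⱼ}] · det[bⱼ(dᵢ)]`. The first factor is
`s_λ(x) Δ(x)`; pulling the row factors `1 - t^{λᵢ+n-i+1}` and the column factors `(yⱼ - ȳⱼ)⁻¹`
out of the second leaves the Weyl numerator of `sp_λ`.
-/

open Finset Matrix Equiv

section Series

variable {κ R : Type*} [NormedCommRing R] [CompleteSpace R] {n : ℕ}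

theorem summable_norm_prod_pi_and_hasSum_prod_pi (f : Fin n → κ → R)
    (hf : ∀ j, Summable fun k => ‖f j k‖) :
    (Summable fun g : Fin n → κ => ‖∏ j, f j (g j)‖) ∧
      HasSum (fun g : Fin n → κ => ∏ j, f j (g j)) (∏ j, ∑' k, f j k) := by
  induction n with
  | zero => exact ⟨(hasSum_fintype _).summable, by simp⟩
  | succ n ih =>
    obtain ⟨ihS, ihH⟩ := ih (fun j => f j.succ) fun j => hf j.succ
    have hmul : HasSum (fun p : κ × (Fin n → κ) => f 0 p.1 * ∏ j : Fin n, f j.succ (p.2 j))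
        ((∑' k, f 0 k) * ∏ j : Fin n, ∑' k, f j.succ k) := by
      rw [← ihH.tsum_eq, tsum_mul_tsum_of_summable_norm (hf 0) ihS]
      exact (summable_mul_of_summable_norm (hf 0) ihS).hasSum
    let e := Fin.consEquiv fun _ : Fin (n + 1) => κ
    have he : ∀ p, ∏ j, f j (e p j) = f 0 p.1 * ∏ j : Fin n, f j.succ (p.2 j) := fun p => by
      simp [e, Fin.consEquiv, Fin.prod_univ_succ]
    refine ⟨e.summable_iff.1 ?_, e.hasSum_iff.1 ?_⟩
    · exact ((hf 0).mul_norm ihS).congr fun p => by simp only [Function.comp_apply, he]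
    · rw [Fin.prod_univ_succ]
      exact hmul.congr_fun fun p => he p

theorem hasSum_det_of_hasSum_mul (A : Fin n → κ → R) (B : κ → Fin n → R)
    {E : Matrix (Fin n) (Fin n) R} (hsum : ∀ i j, Summable fun k => ‖A i k * B k j‖)
    (hE : ∀ i j, HasSum (fun k => A i k * B k j) (E i j)) :
    HasSum (fun g : Fin n → κ => (of fun i j => A i (g j)).det * ∏ j, B (g j) j) E.det := by
  have hσ : ∀ σ : Perm (Fin n), HasSum (fun g : Fin n → κ => ∏ j, A (σ j) (g j) * B (g j) j)
      (∏ j, E (σ j) j) := fun σ => by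
    simpa only [(hE _ _).tsum_eq] using
      (summable_norm_prod_pi_and_hasSum_prod_pi _ fun j => hsum (σ j) j).2
  rw [det_apply']
  refine (hasSum_sum fun σ _ => (hσ σ).mul_left (Perm.sign σ : R)).congr_fun fun g => ?_
  simp only [det_apply', of_apply, sum_mul, prod_mul_distrib, mul_assoc]

end Series

section StrictAntiPerm

variable {κ : Type*} {n : ℕ}

theorem sum_perm_det_comp_mul_prod {R : Type*} [CommRing R] (A : Fin n → κ → R)
    (B : κ → Fin n → R) (d : Fin n → κ) :
    ∑ π : Perm (Fin n), (of fun i j => A i ((d ∘ π) j)).det * ∏ j, B ((d ∘ π) j) j =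
      (of fun i j => A i (d j)).det * (of fun i j => B (d i) j).det := by
  have hperm : ∀ π : Perm (Fin n), (of fun i j => A i (d (π j))).det =
      Perm.sign π * (of fun i j => A i (d j)).det := fun π =>
    det_permute' π (of fun i j => A i (d j))
  simp only [Function.comp_apply, hperm, mul_assoc, mul_left_comm _ (of _).det, ← mul_sum]
  rw [det_apply' (of fun i j => B (d i) j)]
  rfl

variable [LinearOrder κ]

theorem injective_strictAnti_comp_perm :
    Function.Injective fun p : {d : Fin n → κ // StrictAnti d} × Perm (Fin n) => p.1.1 ∘ p.2 := by
  rintro ⟨⟨d, hd⟩, π⟩ ⟨⟨d', hd'⟩, π'⟩ (h : d ∘ π = d' ∘ π')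
  have hdd : d = d' := calc
    d = (d' ∘ π') ∘ π.symm := by rw [← h]; ext; simp
    _ = (d' ∘ π') ∘ π'.symm :=
      Tuple.unique_antitone (by rw [← h]; simpa [Function.comp_assoc] using hd.antitone)
        (by simpa [Function.comp_assoc] using hd'.antitone)
    _ = d' := by ext; simp
  subst hdd
  have hππ : π = π' := Equiv.ext fun j => hd.injective (congrFun h j)
  subst hππ
  rfl

theorem exists_strictAnti_comp_perm {g : Fin n → κ} (hg : Function.Injective g) :
    ∃ p : {d : Fin n → κ // StrictAnti d} × Perm (Fin n), p.1.1 ∘ p.2 = g := by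
  set σ := Tuple.sort g * Fin.revPerm
  have hmono : StrictMono (g ∘ Tuple.sort g) :=
    (Tuple.monotone_sort g).strictMono_of_injective (hg.comp (Tuple.sort g).injective)
  have hd : StrictAnti (g ∘ σ) := fun a b hab => hmono (Fin.rev_lt_rev.mpr hab)
  exact ⟨(⟨g ∘ σ, hd⟩, σ⁻¹), by ext; simp⟩

end StrictAntiPerm

/-- The Cauchy–Binet formula for the product of an `n × κ` and a `κ × n` matrix. -/
theorem hasSum_det_mul_det_of_hasSum_mul {κ R : Type*} [LinearOrder κ] [NormedCommRing R]
    [CompleteSpace R] {n : ℕ} (A : Fin n → κ → R) (B : κ → Fin n → R)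
    {E : Matrix (Fin n) (Fin n) R} (hsum : ∀ i j, Summable fun k => ‖A i k * B k j‖)
    (hE : ∀ i j, HasSum (fun k => A i k * B k j) (E i j)) :
    HasSum (fun d : {d : Fin n → κ // StrictAnti d} =>
      (of fun i j => A i (d.1 j)).det * (of fun i j => B (d.1 i) j).det) E.det := by
  have hvanish : ∀ g ∉ Set.range fun p : {d : Fin n → κ // StrictAnti d} × Perm (Fin n) =>
      p.1.1 ∘ p.2, (of fun i j => A i (g j)).det * ∏ j, B (g j) j = 0 := by
    intro g hg
    obtain ⟨a, b, hab, hne⟩ : ∃ a b, g a = g b ∧ a ≠ b :=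
      Function.not_injective_iff.1 fun hinj => hg (exists_strictAnti_comp_perm hinj)
    rw [det_zero_of_column_eq hne fun i => by simp [hab], zero_mul]
  have hsumPerm := (injective_strictAnti_comp_perm.hasSum_iff hvanish).2
    (hasSum_det_of_hasSum_mul A B hsum hE)
  exact hsumPerm.prod_fiberwise fun d => by
    rw [← sum_perm_det_comp_mul_prod]
    exact hasSum_fintype _

theorem StrictAnti.add_val_le_add_val {n : ℕ} {d : Fin n → ℕ} (hd : StrictAnti d) {i j : Fin n}
    (hij : i ≤ j) : d j + j ≤ d i + i := by
  obtain ⟨k, hk⟩ : ∃ k, (j : ℕ) = i + k := ⟨j - i, by omega⟩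
  induction k generalizing j with
  | zero => rw [show j = i from Fin.ext (by omega)]
  | succ k ih =>
    let j' : Fin n := ⟨i + k, by omega⟩
    have h1 := ih (j := j') (Fin.le_def.2 (by simp [j'])) rfl
    have h2 := hd (Fin.lt_def.2 (by simp [j']; omega) : j' < j)
    simp only [j'] at h1 h2
    omega

theorem StrictAnti.sub_val_le {n : ℕ} {d : Fin n → ℕ} (hd : StrictAnti d) (i : Fin n) :
    n - 1 - i ≤ d i := by
  have := i.isLt
  have := hd.add_val_le_add_val (Fin.le_def.2 (by dsimp only; omega) : i ≤ ⟨n - 1, by omega⟩)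
  simp only at this
  omega

def antitoneEquivStrictAnti (n : ℕ) :
    {l : Fin n → ℕ // Antitone l} ≃ {d : Fin n → ℕ // StrictAnti d} where
  toFun l := ⟨fun j => l.1 j + (n - 1 - j), fun a b hab => by
    have := l.2 hab.le
    have := Fin.lt_def.1 hab
    have := b.isLt
    dsimp only
    omega⟩
  invFun d := ⟨fun j => d.1 j - (n - 1 - j), fun a b hab => by
    have := d.2.add_val_le_add_val hab
    have := d.2.sub_val_le b
    dsimp only
    omega⟩
  left_inv l := by ext; simp
  right_inv d := by
    ext j
    have := d.2.sub_val_le j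
    simp only
    omega

theorem coe_antitoneEquivStrictAnti_apply (n : ℕ) (l : {l : Fin n → ℕ // Antitone l}) :
    (antitoneEquivStrictAnti n l : Fin n → ℕ) = fun j => l.1 j + (n - 1 - j) :=
  rfl

/-- `(1 - t^{m+1}) sp_{(m)}(y, ȳ)`, the one-variable case of the summand. -/
def refinedSpRow (t y : ℂ) (m : ℕ) : ℂ :=
  (1 - t ^ (m + 1)) * (y ^ (m + 1) - y⁻¹ ^ (m + 1)) / (y - y⁻¹)

theorem hasSum_pow_mul_refinedSpRow {x y t : ℂ} (hy : y - y⁻¹ ≠ 0) (ht : ‖t‖ ≤ 1)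
    (hxy : ‖x * y‖ < 1) (hxy' : ‖x * y⁻¹‖ < 1) :
    HasSum (fun m => x ^ m * refinedSpRow t y m)
      ((1 - t * x ^ 2) * ((1 - t) / ((1 - x * y) * (1 - t * (x * y)) *
        (1 - x * y⁻¹) * (1 - t * (x * y⁻¹))))) := by
  have hy0 : y ≠ 0 := by rintro rfl; simp at hy
  have ht' : ∀ {z : ℂ} {r : ℝ}, ‖z‖ < r → ‖t * z‖ < r := fun hz =>
    (norm_mul_le _ _).trans_lt ((mul_le_of_le_one_left (norm_nonneg _) ht).trans_lt hz)
  have hgeom := ((((hasSum_geometric_of_norm_lt_one hxy).mul_left y).sub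
    ((hasSum_geometric_of_norm_lt_one hxy').mul_left y⁻¹)).sub
    ((hasSum_geometric_of_norm_lt_one (ht' hxy)).mul_left (t * y))).add
    ((hasSum_geometric_of_norm_lt_one (ht' hxy')).mul_left (t * y⁻¹)) |>.div_const (y - y⁻¹)
  have hval : (1 - t * x ^ 2) * ((1 - t) / ((1 - x * y) * (1 - t * (x * y)) *
      (1 - x * y⁻¹) * (1 - t * (x * y⁻¹)))) = (y * (1 - x * y)⁻¹ - y⁻¹ * (1 - x * y⁻¹)⁻¹ -
        t * y * (1 - t * (x * y))⁻¹ + t * y⁻¹ * (1 - t * (x * y⁻¹))⁻¹) / (y - y⁻¹) := by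
    -- `field_simp` first clears `y⁻¹`, so it needs the factors as `y - x`, `y - t x`, `y² - 1`.
    have hne : ∀ {a b : ℂ}, ‖a‖ < ‖b‖ → b - a ≠ 0 := fun h =>
      sub_ne_zero.2 fun hba => h.ne (by rw [hba])
    have hxy'' : ‖x‖ < ‖y‖ := by
      rwa [norm_mul, norm_inv, ← div_eq_mul_inv, div_lt_one (norm_pos_iff.2 hy0)] at hxy'
    have h1 : 1 - x * y ≠ 0 := hne (by rwa [norm_one])
    have h2 : y - x ≠ 0 := hne hxy''
    have h3 : 1 - t * x * y ≠ 0 := hne (by rw [norm_one, mul_assoc]; exact ht' hxy)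
    have h4 : y - t * x ≠ 0 := hne (ht' hxy'')
    have hy' : y ^ 2 - 1 ≠ 0 := fun h => hy (by field_simp; linear_combination h)
    field_simp
    ring
  rw [hval]
  refine hgeom.congr_fun fun m => ?_
  rw [refinedSpRow, mul_div_assoc']
  congr 1
  simp only [pow_succ, mul_pow]
  ring

theorem vprod_ne_zero {n : ℕ} {x : Fin n → ℂ} (hx : Function.Injective x) : vprod x ≠ 0 :=
  prod_ne_zero_iff.2 fun _ _ => prod_ne_zero_iff.2 fun _ hj =>
    sub_ne_zero.2 <| hx.ne (mem_Ioi.1 hj).ne'.symm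

theorem prod_one_sub_inv_mul_inv_ne_zero {n : ℕ} {y : Fin n → ℂ}
    (hy : ∀ i j, i ≠ j → y i * y j ≠ 1) :
    ∏ i : Fin n, ∏ j ∈ Ioi i, (1 - (y i)⁻¹ * (y j)⁻¹) ≠ 0 :=
  prod_ne_zero_iff.2 fun i _ => prod_ne_zero_iff.2 fun j hj => by
    rw [sub_ne_zero, ← mul_inv, ne_comm, inv_ne_one]
    exact hy i j (mem_Ioi.1 hj).ne

theorem det_pow_staircase {n : ℕ} (l : Fin n → ℕ) {x : Fin n → ℂ} (hx : vprod x ≠ 0) :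
    (of fun i j => x i ^ (l j + (n - 1 - j))).det = schurPoly l x * vprod x :=
  (div_mul_cancel₀ _ hx).symm

theorem det_refinedSpRow_staircase {n : ℕ} (t : ℂ) (l : Fin n → ℕ) {y : Fin n → ℂ}
    (hy : ∀ j, y j - (y j)⁻¹ ≠ 0) (hvy : vprod y ≠ 0)
    (hyy : ∏ i : Fin n, ∏ j ∈ Ioi i, (1 - (y i)⁻¹ * (y j)⁻¹) ≠ 0) :
    (of fun i j => refinedSpRow t (y j) (l i + (n - 1 - i))).det =
      (∏ i, (1 - t ^ (l i + (n - i)))) * spChar l y *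
        (vprod y * ∏ i : Fin n, ∏ j ∈ Ioi i, (1 - (y i)⁻¹ * (y j)⁻¹)) := by
  have hexp : ∀ i : Fin n, l i + (n - 1 - i) + 1 = l i + (n - i) := fun i => by
    have := i.isLt
    omega
  have hmat : (of fun i j => refinedSpRow t (y j) (l i + (n - 1 - i))) =
      of fun i j => (1 - t ^ (l i + (n - i))) * ((y j - (y j)⁻¹)⁻¹ *
        (y j ^ (l i + (n - i)) - (y j)⁻¹ ^ (l i + (n - i)))) := by
    ext i j
    simp only [of_apply, refinedSpRow, hexp, div_eq_mul_inv]
    ring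
  have hP : ∏ i, (y i - (y i)⁻¹) ≠ 0 := prod_ne_zero_iff.2 fun i _ => hy i
  have hQ : ∏ i : Fin n, ∏ j ∈ Ioi i, ((y i - y j) * (1 - (y i)⁻¹ * (y j)⁻¹)) =
      vprod y * ∏ i : Fin n, ∏ j ∈ Ioi i, (1 - (y i)⁻¹ * (y j)⁻¹) := by
    simp only [vprod, prod_mul_distrib]
  have hsp : (of fun i j => y j ^ (l i + (n - i)) - (y j)⁻¹ ^ (l i + (n - i))).det =
      spChar l y * ((∏ i, (y i - (y i)⁻¹)) *
        (vprod y * ∏ i : Fin n, ∏ j ∈ Ioi i, (1 - (y i)⁻¹ * (y j)⁻¹))) := by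
    rw [← det_transpose, spChar, hQ, div_mul_cancel₀ _ (mul_ne_zero hP (mul_ne_zero hvy hyy))]
    rfl
  calc _ = (∏ i, (1 - t ^ (l i + (n - i)))) * ((∏ j, (y j - (y j)⁻¹)⁻¹) *
        (of fun i j => y j ^ (l i + (n - i)) - (y j)⁻¹ ^ (l i + (n - i))).det) := by
        rw [hmat, ← det_mul_row, ← det_mul_column]
        rfl
    _ = _ := by
      rw [hsp, prod_inv_distrib, mul_left_comm _ (∏ i, _), inv_mul_cancel_left₀ hP, mul_assoc]

theorem refined_symplectic_cauchy_general (n : ℕ) (x y : Fin n → ℂ) (t : ℂ)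
    (hx : ∀ i, ‖x i‖ < 1 / (16 * (n : ℝ) ^ 2)) (ht : ‖t‖ < 1)
    (hy1 : ∀ j, 1 / 2 < ‖y j‖) (hy2 : ∀ j, ‖y j‖ < 2)
    (hysq : ∀ j, (y j) ^ 2 ≠ 1) (hyy : ∀ i j, i ≠ j → y i * y j ≠ 1)
    (hxinj : Function.Injective x) (hyinj : Function.Injective y) :
    HasSum
      (fun l : {l : Fin n → ℕ // Antitone l} =>
        (∏ i : Fin n, (1 - t ^ (l.1 i + (n - (i : ℕ))))) * schurPoly l.1 x * spChar l.1 y)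
      ((∏ i : Fin n, (1 - t * x i ^ 2)) /
          (vprod x * vprod y *
            ∏ i : Fin n, ∏ j ∈ Finset.Ioi i, (1 - (y i)⁻¹ * (y j)⁻¹)) *
        (Matrix.of fun i j : Fin n =>
          (1 - t) / ((1 - x i * y j) * (1 - t * (x i * y j)) *
            (1 - x i * (y j)⁻¹) * (1 - t * (x i * (y j)⁻¹)))).det) := by
  have hy0 : ∀ j, y j ≠ 0 := fun j => norm_pos_iff.1 (one_half_pos.trans (hy1 j))
  have hyinv : ∀ j, y j - (y j)⁻¹ ≠ 0 := fun j h => hysq j <| by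
    rw [sq]
    nth_rewrite 2 [sub_eq_zero.1 h]
    exact mul_inv_cancel₀ (hy0 j)
  have hsmall : ∀ i {z : ℂ}, ‖z‖ < 2 → ‖x i * z‖ < 1 := fun i z hz => by
    have hn : (1 : ℝ) ≤ n := by exact_mod_cast i.pos
    have : ‖x i‖ < 1 / 2 := (hx i).trans_le <| by
      rw [div_le_div_iff₀ (by positivity) (by norm_num)]
      nlinarith
    rw [norm_mul]
    nlinarith [norm_nonneg (x i), norm_nonneg z]
  have hinv2 : ∀ j, ‖(y j)⁻¹‖ < 2 := fun j => by
    rw [norm_inv]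
    exact inv_lt_of_inv_lt₀ (by norm_num) (by simpa using hy1 j)
  have hentry := fun i j => hasSum_pow_mul_refinedSpRow (hyinv j) ht.le
    (hsmall i (hy2 j)) (hsmall i (hinv2 j))
  have hvx := vprod_ne_zero hxinj
  have hvy := vprod_ne_zero hyinj
  have hyy' := prod_one_sub_inv_mul_inv_ne_zero hyy
  have hCB := hasSum_det_mul_det_of_hasSum_mul (fun i m => x i ^ m)
    (fun m j => refinedSpRow t (y j) m) (fun i j => summable_norm_iff.2 (hentry i j).summable)
    hentry
  have hsum := ((antitoneEquivStrictAnti n).hasSum_iff.2 hCB).div_const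
    (vprod x * vprod y * ∏ i : Fin n, ∏ j ∈ Ioi i, (1 - (y i)⁻¹ * (y j)⁻¹))
  rw [div_mul_eq_mul_div, ← det_mul_column]
  refine hsum.congr_fun fun l => ?_
  simp only [Function.comp_apply, coe_antitoneEquivStrictAnti_apply, det_pow_staircase _ hvx,
    det_refinedSpRow_staircase t _ hyinv hvy hyy']
  rw [eq_div_iff (mul_ne_zero (mul_ne_zero hvx hvy) hyy')]
  ring

/-- **Refined symplectic Cauchy identity** (Theorem 3):
`Σ_λ ∏_{i=1}^n (1 - t^{λᵢ-i+n+1}) s_λ(x) sp_λ(y,ȳ)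
  = (∏ᵢ (1-t xᵢ²)) / (Δ(x)ₙ Δ(y)ₙ ∏_{i<j} (1-ȳᵢȳⱼ))
      · det[(1-t)/((1-xᵢyⱼ)(1-t xᵢyⱼ)(1-xᵢȳⱼ)(1-t xᵢȳⱼ))]`,
the sum being over all partitions `λ` with `ℓ(λ) ≤ n`.  It is stated here for complex
values of the variables in a domain of convergence. -/
theorem refined_symplectic_cauchy (n : ℕ) (hn : 1 ≤ n) (x y : Fin n → ℂ) (t : ℂ)
    (hx : ∀ i, ‖x i‖ < 1 / (16 * (n : ℝ) ^ 2)) (ht : ‖t‖ < 1)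
    (hy1 : ∀ j, 1 / 2 < ‖y j‖) (hy2 : ∀ j, ‖y j‖ < 2)
    (hysq : ∀ j, (y j) ^ 2 ≠ 1) (hyy : ∀ i j, i ≠ j → y i * y j ≠ 1)
    (hxinj : Function.Injective x) (hyinj : Function.Injective y) :
    HasSum
      (fun l : {l : Fin n → ℕ // Antitone l} =>
        (∏ i : Fin n, (1 - t ^ (l.1 i + (n - (i : ℕ))))) * schurPoly l.1 x * spChar l.1 y)
      ((∏ i : Fin n, (1 - t * x i ^ 2)) /
          (vprod x * vprod y *
            ∏ i : Fin n, ∏ j ∈ Finset.Ioi i, (1 - (y i)⁻¹ * (y j)⁻¹)) *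
        (Matrix.of fun i j : Fin n =>
          (1 - t) / ((1 - x i * y j) * (1 - t * (x i * y j)) *
            (1 - x i * (y j)⁻¹) * (1 - t * (x i * (y j)⁻¹)))).det) :=
  refined_symplectic_cauchy_general n x y t hx ht hy1 hy2 hysq hyy hxinj hyinj
end
end

section
/- (Cauchy determinant.) For indeterminates x_1,…,x_n and y_1,…,y_n, det[ 1/(1 − x_i y_j) ]_{1≤i,j≤n} = Δ(x)_n Δ(y)_n / ∏_{i,j=1}^{n} (1 − x_i y_j), as an identity of rational functions. -/
/-!
The Schur complement of the pivot `(0, 0)` of a Cauchy matrix `C = [1/(1 - xᵢ yⱼ)]` is again a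
Cauchy matrix, in the remaining variables, scaled on the left by `diag((xᵢ - x₀)/(1 - xᵢ y₀))`
and on the right by `diag((yⱼ - y₀)/(1 - x₀ yⱼ))`. Hence `det C` satisfies the same recursion in
`n` as `Δ(x) Δ(y) ∏ᵢⱼ 1/(1 - xᵢ yⱼ)`, whose factors split off their `x₀`, `y₀` parts the same way.
-/

open Finset

namespace Matrix

variable {K : Type*} [Field K] {n : ℕ}

theorem det_succ_eq_mul_det_schur (A : Matrix (Fin (n + 1)) (Fin (n + 1)) K) (h : A 0 0 ≠ 0) :
    A.det = A 0 0 *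
      (of fun i j : Fin n => A i.succ j.succ - A i.succ 0 * A 0 j.succ / A 0 0).det := by
  let c : Fin (n + 1) → K := Fin.cons 0 fun i => A i.succ 0 / A 0 0
  let B : Matrix (Fin (n + 1)) (Fin (n + 1)) K := of fun i j => A i j - c i * A 0 j
  have hB_zero : ∀ j, B 0 j = A 0 j := by simp [B, c]
  have hB_succ_zero : ∀ i : Fin n, B i.succ 0 = 0 := fun i => by
    simp [B, c, div_mul_cancel₀ _ h]
  rw [det_eq_of_forall_row_eq_smul_add_const c 0 rfl (B := B) fun i j => by simp [B, hB_zero],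
    det_succ_column_zero, Fin.sum_univ_succ]
  simp only [hB_succ_zero, hB_zero, Fin.val_zero, pow_zero, one_mul, mul_zero, zero_mul,
    sum_const_zero, add_zero, Fin.succAbove_zero]
  congr 2
  ext i j
  simp [B, c]
  ring

end Matrix

namespace Fin

variable {M : Type*} [CommMonoid M] {n : ℕ}

theorem prod_prod_Ioi_succ (f : Fin (n + 1) → Fin (n + 1) → M) :
    ∏ i, ∏ j ∈ Ioi i, f i j =
      (∏ j : Fin n, f 0 j.succ) * ∏ i : Fin n, ∏ j ∈ Ioi i, f i.succ j.succ := by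
  rw [prod_univ_succ, prod_Ioi_zero]
  simp only [prod_Ioi_succ]

theorem prod_prod_univ_succ (f : Fin (n + 1) → Fin (n + 1) → M) :
    ∏ i, ∏ j, f i j =
      f 0 0 * (∏ j : Fin n, f 0 j.succ) * (∏ i : Fin n, f i.succ 0) *
        ∏ i : Fin n, ∏ j : Fin n, f i.succ j.succ := by
  simp only [prod_univ_succ, prod_mul_distrib]
  ac_rfl

end Fin

section Cauchy

variable {K : Type*} [Field K] {n : ℕ}

def cauchyMatrix {ι κ : Type*} (x : ι → K) (y : κ → K) : Matrix ι κ K :=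
  Matrix.of fun i j => 1 / (1 - x i * y j)

-- Cleared of denominators: `(1 - ab')(1 - a'b) - (1 - ab)(1 - a'b') = (a - a')(b - b')`.
theorem one_div_one_sub_mul_schur {a a' b b' : K} (hab : a * b ≠ 1) (hab' : a * b' ≠ 1)
    (ha'b : a' * b ≠ 1) :
    1 / (1 - a * b) - 1 / (1 - a * b') * (1 / (1 - a' * b)) / (1 / (1 - a' * b')) =
      (a - a') * (1 / (1 - a * b')) * ((b - b') * (1 / (1 - a' * b)) * (1 / (1 - a * b))) := by
  have := sub_ne_zero_of_ne hab.symm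
  have := sub_ne_zero_of_ne hab'.symm
  have := sub_ne_zero_of_ne ha'b.symm
  grind

theorem det_cauchyMatrix_succ (x y : Fin (n + 1) → K) (h : ∀ i j, x i * y j ≠ 1) :
    (cauchyMatrix x y).det =
      (∏ i : Fin n, (x i.succ - x 0)) * (∏ j : Fin n, (y j.succ - y 0)) *
        (1 / (1 - x 0 * y 0) * (∏ j : Fin n, 1 / (1 - x 0 * y j.succ)) *
          ∏ i : Fin n, 1 / (1 - x i.succ * y 0)) *
        (cauchyMatrix (Fin.tail x) (Fin.tail y)).det := by
  have hpivot : cauchyMatrix x y 0 0 ≠ 0 := one_div_ne_zero (sub_ne_zero_of_ne (h 0 0).symm)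
  have hschur : (Matrix.of fun i j : Fin n => cauchyMatrix x y i.succ j.succ -
        cauchyMatrix x y i.succ 0 * cauchyMatrix x y 0 j.succ / cauchyMatrix x y 0 0) =
      Matrix.diagonal (fun i => (x i.succ - x 0) * (1 / (1 - x i.succ * y 0))) *
        cauchyMatrix (Fin.tail x) (Fin.tail y) *
        Matrix.diagonal (fun j => (y j.succ - y 0) * (1 / (1 - x 0 * y j.succ))) := by
    ext i j
    simp only [Matrix.mul_diagonal, Matrix.diagonal_mul, cauchyMatrix, Matrix.of_apply, Fin.tail,
      one_div_one_sub_mul_schur (h _ _) (h _ _) (h _ _)]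
    ring
  rw [Matrix.det_succ_eq_mul_det_schur _ hpivot, hschur, Matrix.det_mul, Matrix.det_mul,
    Matrix.det_diagonal, Matrix.det_diagonal, prod_mul_distrib, prod_mul_distrib]
  simp only [cauchyMatrix, Matrix.of_apply]
  ring

theorem det_cauchyMatrix (x y : Fin n → K) (h : ∀ i j, x i * y j ≠ 1) :
    (cauchyMatrix x y).det =
      (∏ i, ∏ j ∈ Ioi i, (x i - x j)) * (∏ i, ∏ j ∈ Ioi i, (y i - y j)) *
        ∏ i, ∏ j, 1 / (1 - x i * y j) := by
  induction n with
  | zero => simp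
  | succ n ih =>
    have hsign : (∏ k : Fin n, (x 0 - x k.succ)) * ∏ k : Fin n, (y 0 - y k.succ) =
        (∏ k : Fin n, (x k.succ - x 0)) * ∏ k : Fin n, (y k.succ - y 0) := by
      simp only [← prod_mul_distrib]
      exact prod_congr rfl fun _ _ => by ring
    rw [det_cauchyMatrix_succ x y h, ih (Fin.tail x) (Fin.tail y) fun i j => h i.succ j.succ,
      Fin.prod_prod_Ioi_succ, Fin.prod_prod_Ioi_succ,
      Fin.prod_prod_univ_succ (fun i j => 1 / (1 - x i * y j)),
      mul_mul_mul_comm (∏ k : Fin n, (x 0 - x k.succ)), hsign]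
    simp only [Fin.tail]
    ring

end Cauchy

/-- **Cauchy determinant.**  For indeterminates `x₁,…,xₙ` and `y₁,…,yₙ` (here: elements of a
field such that all denominators are nonzero),
`det[1/(1 - xᵢ yⱼ)] = Δ(x) Δ(y) / ∏_{i,j} (1 - xᵢ yⱼ)`,
where `Δ(x) = ∏_{i<j} (xᵢ - xⱼ)`. -/
theorem cauchy_determinant {K : Type*} [Field K] (n : ℕ) (x y : Fin n → K)
    (h : ∀ i j, x i * y j ≠ 1) :
    (Matrix.of fun i j : Fin n => 1 / (1 - x i * y j)).det =
      (∏ i : Fin n, ∏ j ∈ Finset.Ioi i, (x i - x j)) *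
        (∏ i : Fin n, ∏ j ∈ Finset.Ioi i, (y i - y j)) /
        ∏ i : Fin n, ∏ j : Fin n, (1 - x i * y j) := by
  rw [← cauchyMatrix, det_cauchyMatrix x y h, div_eq_mul_inv]
  simp only [one_div, prod_inv_distrib]
end

section
/- For indeterminates x_1,…,x_n and y_1,…,y_n, with ȳ_j = 1/y_j, det[ 1/((1 − x_i y_j)(1 − x_i ȳ_j)) ]_{1≤i,j≤n} = Δ(x)_n Δ(y)_n ∏_{1≤i<j≤n} (1 − x_i x_j)(1 − ȳ_i ȳ_j) / ∏_{i,j=1}^{n} (1 − x_i y_j)(1 − x_i ȳ_j), as an identity of rational functions. -/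
/-!
Since `(1 - x y)(1 - x ȳ) = (1 + x²) - x (y + ȳ)`, the matrix is `[1 / (aᵢ + bᵢ dⱼ)]` with
`aᵢ = 1 + xᵢ²`, `bᵢ = -xᵢ`, `dⱼ = yⱼ + ȳⱼ`. Such a matrix has the Cauchy-type determinant
`∏_{i<j} (aⱼ bᵢ - aᵢ bⱼ)(dⱼ - dᵢ) / ∏_{i,j} (aᵢ + bᵢ dⱼ)`: pivoting on the `(0, 0)` entry, the Schur
complement is again a matrix of this shape, scaled by a diagonal matrix on each side, because
`pᵢ₀ p₀ⱼ - p₀₀ pᵢⱼ = (a₀ bᵢ - aᵢ b₀)(d₀ - dⱼ)` for `pᵢⱼ = aᵢ + bᵢ dⱼ`. Finally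
`aⱼ bᵢ - aᵢ bⱼ = (xⱼ - xᵢ)(1 - xᵢ xⱼ)` and `dⱼ - dᵢ = (yⱼ - yᵢ)(1 - ȳᵢ ȳⱼ)`.
-/

open Finset Matrix

theorem Matrix.det_succ_eq_mul_det_schur_s5 {K : Type*} [Field K] {n : ℕ}
    (A : Matrix (Fin (n + 1)) (Fin (n + 1)) K) (h : A 0 0 ≠ 0) :
    A.det = A 0 0 *
      (of fun i j : Fin n => A i.succ j.succ - A i.succ 0 * A 0 j.succ / A 0 0).det := by
  set B : Matrix (Fin (n + 1)) (Fin (n + 1)) K :=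
    of fun i j => if i = 0 then A i j else A i j - A i 0 * A 0 j / A 0 0
  have hAB : A.det = B.det :=
    det_eq_of_forall_row_eq_smul_add_const (fun i => if i = 0 then 0 else A i 0 / A 0 0) 0
      (if_pos rfl) fun i j => by
        simp only [B, of_apply]
        split_ifs <;> ring
  have hB0 : ∀ i : Fin n, B i.succ 0 = 0 := fun i => by
    simp [B, Fin.succ_ne_zero, mul_div_cancel_right₀ _ h]
  rw [hAB, det_succ_column_zero, Fin.sum_univ_succ]
  simp only [hB0, mul_zero, zero_mul, Finset.sum_const_zero, add_zero]
  simp [B, Fin.succ_ne_zero, submatrix]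

theorem inv_sub_inv_mul_inv_div_inv {K : Type*} [Field K] {p q r : K} (s : K) (hp : p ≠ 0)
    (hq : q ≠ 0) (hr : r ≠ 0) :
    p⁻¹ - q⁻¹ * r⁻¹ / s⁻¹ = (q * r - s * p) / (q * r * p) := by
  field_simp

theorem Matrix.det_inv_add_mul {K : Type*} [Field K] {n : ℕ} (a b d : Fin n → K)
    (h : ∀ i j, a i + b i * d j ≠ 0) :
    (of fun i j => (a i + b i * d j)⁻¹).det =
      (∏ i, ∏ j ∈ Ioi i, (a j * b i - a i * b j) * (d j - d i)) /
        ∏ i, ∏ j, (a i + b i * d j) := by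
  induction n with
  | zero => simp
  | succ n ih =>
    have hschur : (of fun i j : Fin n =>
          (a i.succ + b i.succ * d j.succ)⁻¹ -
            (a i.succ + b i.succ * d 0)⁻¹ * (a 0 + b 0 * d j.succ)⁻¹ / (a 0 + b 0 * d 0)⁻¹) =
        diagonal (fun i => (a 0 * b i.succ - a i.succ * b 0) / (a i.succ + b i.succ * d 0)) *
          (of fun i j : Fin n => (a i.succ + b i.succ * d j.succ)⁻¹) *
          diagonal (fun j => (d 0 - d j.succ) / (a 0 + b 0 * d j.succ)) := by
      ext i j
      rw [mul_diagonal, diagonal_mul, of_apply, of_apply,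
        inv_sub_inv_mul_inv_div_inv _ (h _ _) (h _ _) (h _ _)]
      field_simp
      ring
    rw [det_succ_eq_mul_det_schur_s5 _ (inv_ne_zero (h 0 0))]
    simp only [of_apply]
    rw [hschur, det_mul, det_mul, det_diagonal, det_diagonal, ih _ _ _ fun i j => h _ _]
    have hnum : ∏ i : Fin (n + 1), ∏ j ∈ Ioi i, (a j * b i - a i * b j) * (d j - d i) =
        (∏ j : Fin n, (a 0 * b j.succ - a j.succ * b 0) * (d 0 - d j.succ)) *
          ∏ i : Fin n, ∏ j ∈ Ioi i, (a j.succ * b i.succ - a i.succ * b j.succ) *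
            (d j.succ - d i.succ) := by
      simp only [Fin.prod_univ_succ, Fin.prod_Ioi_zero, Fin.prod_Ioi_succ]
      congr 1
      exact prod_congr rfl fun j _ => by ring
    have hden : ∏ i : Fin (n + 1), ∏ j : Fin (n + 1), (a i + b i * d j) =
        (a 0 + b 0 * d 0) * (∏ i : Fin n, (a i.succ + b i.succ * d 0)) *
          (∏ j : Fin n, (a 0 + b 0 * d j.succ)) *
          ∏ i : Fin n, ∏ j : Fin n, (a i.succ + b i.succ * d j.succ) := by
      simp only [Fin.prod_univ_succ, prod_mul_distrib]
      ring
    have hp₀₀ := h 0 0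
    have hpᵢ₀ : ∏ i : Fin n, (a i.succ + b i.succ * d 0) ≠ 0 :=
      prod_ne_zero_iff.mpr fun i _ => h _ _
    have hp₀ⱼ : ∏ j : Fin n, (a 0 + b 0 * d j.succ) ≠ 0 :=
      prod_ne_zero_iff.mpr fun j _ => h _ _
    rw [hnum, hden, prod_div_distrib, prod_div_distrib, prod_mul_distrib]
    field_simp

/-- **A further Cauchy determinant.**  With `ȳⱼ = (yⱼ)⁻¹`,
`det[1/((1-xᵢyⱼ)(1-xᵢȳⱼ))] = Δ(x) Δ(y) ∏_{i<j} (1-xᵢxⱼ)(1-ȳᵢȳⱼ) / ∏_{i,j} (1-xᵢyⱼ)(1-xᵢȳⱼ)`. -/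
theorem symplectic_cauchy_determinant {K : Type*} [Field K] (n : ℕ) (x y : Fin n → K)
    (hy0 : ∀ j, y j ≠ 0)
    (h1 : ∀ i j, x i * y j ≠ 1) (h2 : ∀ i j, x i * (y j)⁻¹ ≠ 1) :
    (Matrix.of fun i j : Fin n =>
        1 / ((1 - x i * y j) * (1 - x i * (y j)⁻¹))).det =
      (∏ i : Fin n, ∏ j ∈ Finset.Ioi i, (x i - x j)) *
        (∏ i : Fin n, ∏ j ∈ Finset.Ioi i, (y i - y j)) *
        (∏ i : Fin n, ∏ j ∈ Finset.Ioi i, (1 - x i * x j) * (1 - (y i)⁻¹ * (y j)⁻¹)) /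
        ∏ i : Fin n, ∏ j : Fin n, (1 - x i * y j) * (1 - x i * (y j)⁻¹) := by
  have hfac : ∀ i j, (1 - x i * y j) * (1 - x i * (y j)⁻¹) =
      (1 + x i * x i) + -x i * (y j + (y j)⁻¹) := fun i j => by
    field_simp [hy0 j]
    ring
  have hne : ∀ i j, (1 + x i * x i) + -x i * (y j + (y j)⁻¹) ≠ 0 := fun i j => by
    rw [← hfac]
    exact mul_ne_zero (sub_ne_zero.mpr (h1 i j).symm) (sub_ne_zero.mpr (h2 i j).symm)
  simp only [one_div, hfac]
  rw [det_inv_add_mul _ _ _ hne, ← prod_mul_distrib, ← prod_mul_distrib]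
  congr 1
  refine prod_congr rfl fun i _ => ?_
  rw [← prod_mul_distrib, ← prod_mul_distrib]
  refine prod_congr rfl fun j _ => ?_
  field_simp [hy0 i, hy0 j]
  ring
end

section
/- For indeterminates x_1,…,x_n, y_1,…,y_n, t, one has det[ (1−t) / ((1−x_i y_j)(1−t x_i y_j)) ]_{1≤i,j≤n} = Σ_{S ⊆ {1,…,n}} (−t)^{|S|} det[ 1/(1 − x_i^S y_j) ]_{1≤i,j≤n}, where x_i^S = t x_i if i ∈ S and x_i^S = x_i if i ∉ S, as an identity of rational functions. -/
/-!
By partial fractions each entry is `-t / (1 - t xᵢ yⱼ) + 1 / (1 - xᵢ yⱼ)`. Expanding the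
determinant multilinearly in the rows gives one term for each set `S` of rows taken from the
first summand, and pulling the factor `-t` out of those rows leaves `(-t)^|S| det[1/(1 - xᵢ^S yⱼ)]`.
-/

open Finset

theorem one_sub_div_one_sub_mul_one_sub_mul {K : Type*} [Field K] {a t : K}
    (ha : 1 - a ≠ 0) (hta : 1 - t * a ≠ 0) :
    (1 - t) / ((1 - a) * (1 - t * a)) = -t * (1 / (1 - t * a)) + 1 / (1 - a) := by
  field_simp
  ring

namespace Matrix

variable {n R : Type*} [Fintype n] [DecidableEq n] [CommRing R]

theorem det_of_smul_add_eq_sum_piecewise (c : R) (A B : n → n → R) :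
    det (of (c • A + B)) = ∑ S : Finset n, c ^ #S * det (of (S.piecewise A B)) := by
  refine (detRowAlternating.toMultilinearMap.map_add_univ (c • A) B).trans
    (sum_congr rfl fun S _ => ?_)
  have hrows : S.piecewise (c • A) B = S.piecewise (fun i => c • S.piecewise A B i)
      (S.piecewise A B) := by
    ext i : 1
    by_cases hi : i ∈ S <;> simp [hi]
  rw [hrows, MultilinearMap.map_piecewise_smul, prod_const, smul_eq_mul]
  rfl

end Matrix

/-- Expansion of the Izergin–Korepin-type determinant as a sum over subsets `S ⊆ {1,…,n}`:
`det[(1-t)/((1-xᵢyⱼ)(1-t xᵢyⱼ))] = Σ_S (-t)^{|S|} det[1/(1 - xᵢ^S yⱼ)]`,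
where `xᵢ^S = t xᵢ` if `i ∈ S` and `xᵢ^S = xᵢ` otherwise. -/
theorem det_subset_expansion {K : Type*} [Field K] (n : ℕ) (x y : Fin n → K) (t : K)
    (h1 : ∀ i j, x i * y j ≠ 1) (h2 : ∀ i j, t * (x i * y j) ≠ 1) :
    (Matrix.of fun i j : Fin n =>
        (1 - t) / ((1 - x i * y j) * (1 - t * (x i * y j)))).det =
      ∑ S : Finset (Fin n),
        (-t) ^ S.card *
          (Matrix.of fun i j : Fin n =>
            1 / (1 - (if i ∈ S then t * x i else x i) * y j)).det := by
  have hsplit : (fun i j : Fin n => (1 - t) / ((1 - x i * y j) * (1 - t * (x i * y j)))) =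
      (-t) • (fun i j => 1 / (1 - t * x i * y j)) + (fun i j => 1 / (1 - x i * y j)) := by
    ext i j
    simpa [mul_assoc] using one_sub_div_one_sub_mul_one_sub_mul
      (sub_ne_zero.mpr (h1 i j).symm) (sub_ne_zero.mpr (h2 i j).symm)
  rw [hsplit, Matrix.det_of_smul_add_eq_sum_piecewise]
  refine sum_congr rfl fun S _ => ?_
  congr 3
  ext i j
  by_cases hi : i ∈ S <;> simp [hi]
end

section
/- (Pfaffian analogue of the Cauchy–Binet identity.) Let m ≤ M with m even, let T be an m×M matrix and A an M×M antisymmetric matrix over a commutative ring. Then Σ_{S ⊆ {1,…,M}, |S| = m} Pf(A_S) · det(T_S) = Pf(T A Tᵗ), where A_S denotes the m×m submatrix of A with rows and columns indexed by S (in increasing order) and T_S the m×m submatrix of T with columns indexed by S (in increasing order). -/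
/-!
Expanding each entry of `T A Tᵀ` and using that the Pfaffian is a sum over perfect matchings
of products of one entry per pair gives `Pf(T A Tᵀ) = ∑_g (∏ᵢ T_{i,g(i)}) Pf(A[g,g])` over all
maps `g : [m] → [M]`. If `g` is not injective, `A[g,g]` is alternating with two equal rows, and
exchanging those two rows in a matching is a sign-reversing involution, so `Pf(A[g,g]) = 0`.
An injective `g` is the increasing enumeration of its image `S` composed with a permutation `σ`,
for which `Pf(A[g,g]) = sgn σ · Pf(A_S)`; summing over `σ` produces `det(T_S)`.

A permutation `σ` of `Fin (2n)` encodes the matching with pairs `{σ(2k), σ(2k+1)}`; `σ` and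
`σ * h` encode the same matching for `h` in the hyperoctahedral group `pairStabilizer n`, and
the normal form `canon σ` picks the representative counted by `pf`.
-/

noncomputable section

open scoped BigOperators
open Matrix

/-- The element of `Fin (2*n)` at even position `2k`. -/
def fe (n : ℕ) (k : Fin n) : Fin (2 * n) :=
  ⟨2 * (k : ℕ), by have := k.isLt; omega⟩

/-- The element of `Fin (2*n)` at odd position `2k+1`. -/
def fo (n : ℕ) (k : Fin n) : Fin (2 * n) :=
  ⟨2 * (k : ℕ) + 1, by have := k.isLt; omega⟩

/-- The Pfaffian of a (skew-symmetric) `2n × 2n` matrix, defined as the sum over all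
perfect matchings: permutations `σ` with `σ(2k) < σ(2k+1)` and
`σ(0) < σ(2) < ⋯ < σ(2n-2)`, of `sign σ · ∏ₖ A (σ (2k)) (σ (2k+1))`. -/
def pf {R : Type*} [CommRing R] {n : ℕ} (A : Matrix (Fin (2 * n)) (Fin (2 * n)) R) : R :=
  ∑ σ ∈ Finset.univ.filter (fun σ : Equiv.Perm (Fin (2 * n)) =>
      (∀ k : Fin n, σ (fe n k) < σ (fo n k)) ∧
        ∀ k l : Fin n, k < l → σ (fe n k) < σ (fe n l)),
    ((Equiv.Perm.sign σ : ℤ) : R) * ∏ k : Fin n, A (σ (fe n k)) (σ (fo n k))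

namespace Pfaffian

open Equiv Equiv.Perm Finset

variable {n : ℕ}

def pairEquiv (n : ℕ) : Fin n × Bool ≃ Fin (2 * n) where
  toFun p := cond p.2 (fo n p.1) (fe n p.1)
  invFun i := (⟨i.val / 2, by have := i.isLt; omega⟩, decide (i.val % 2 = 1))
  left_inv := by
    rintro ⟨k, _ | _⟩
    · simp [fe]
    · simp only [fo, cond_true, Nat.mul_add_mod_self_left, Nat.mod_succ, decide_true,
        Prod.mk.injEq, Fin.ext_iff, and_true]
      omega
  right_inv := by
    intro i
    by_cases h : i.val % 2 = 1
    · simp only [h, decide_true, fo, cond_true, Fin.ext_iff]; omega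
    · simp only [h, decide_false, fe, cond_false, Fin.ext_iff]; omega

@[simp] lemma pairEquiv_false (k : Fin n) : pairEquiv n (k, false) = fe n k := rfl

@[simp] lemma pairEquiv_true (k : Fin n) : pairEquiv n (k, true) = fo n k := rfl

lemma fe_ne_fo (k l : Fin n) : fe n k ≠ fo n l := by
  simp only [fe, fo, ne_eq, Fin.ext_iff]; omega

def pairIdx (i : Fin (2 * n)) : Fin n := ((pairEquiv n).symm i).1

@[simp] lemma pairIdx_pairEquiv (p : Fin n × Bool) : pairIdx (pairEquiv n p) = p.1 := by
  simp [pairIdx]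

@[simp] lemma pairIdx_fe (k : Fin n) : pairIdx (fe n k) = k := pairIdx_pairEquiv (k, false)

@[simp] lemma pairIdx_fo (k : Fin n) : pairIdx (fo n k) = k := pairIdx_pairEquiv (k, true)

lemma exists_ne_pairIdx_eq (a : Fin (2 * n)) : ∃ c ≠ a, pairIdx c = pairIdx a := by
  obtain ⟨⟨k, b⟩, rfl⟩ := (pairEquiv n).surjective a
  exact ⟨pairEquiv n (k, !b), by simp, by simp⟩

lemma eq_fe_fo_or_eq_fo_fe {a b : Fin (2 * n)} (hab : a ≠ b) (h : pairIdx a = pairIdx b) :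
    (a = fe n (pairIdx a) ∧ b = fo n (pairIdx a)) ∨
      (a = fo n (pairIdx a) ∧ b = fe n (pairIdx a)) := by
  obtain ⟨⟨k, x⟩, rfl⟩ := (pairEquiv n).surjective a
  obtain ⟨⟨l, y⟩, rfl⟩ := (pairEquiv n).surjective b
  simp only [pairIdx_pairEquiv] at h ⊢
  subst h
  cases x <;> cases y <;> simp_all

variable {R : Type*} [CommRing R]

lemma intCast_units_mul_self (u : ℤˣ) : ((u : ℤ) : R) * (u : ℤ) = 1 := by
  rw [← Int.cast_mul, ← Units.val_mul, Int.units_mul_self, Units.val_one, Int.cast_one]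

lemma apply_eq_neg_of_transpose_eq_neg {ι : Type*} {B : Matrix ι ι R} (hB : Bᵀ = -B)
    (i j : ι) : B j i = -B i j := by
  simpa using congr_fun₂ hB i j

lemma transpose_submatrix_eq_neg {ι κ : Type*} {B : Matrix ι ι R} (hB : Bᵀ = -B) (f : κ → ι) :
    (B.submatrix f f)ᵀ = -B.submatrix f f := by
  rw [transpose_submatrix, hB]
  rfl

def pfTerm (B : Matrix (Fin (2 * n)) (Fin (2 * n)) R) (σ : Perm (Fin (2 * n))) : R :=
  ((sign σ : ℤ) : R) * ∏ k : Fin n, B (σ (fe n k)) (σ (fo n k))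

def matchingPerms (n : ℕ) : Finset (Perm (Fin (2 * n))) :=
  univ.filter fun σ => (∀ k : Fin n, σ (fe n k) < σ (fo n k)) ∧
    ∀ k l : Fin n, k < l → σ (fe n k) < σ (fe n l)

lemma mem_matchingPerms {σ : Perm (Fin (2 * n))} :
    σ ∈ matchingPerms n ↔ (∀ k : Fin n, σ (fe n k) < σ (fo n k)) ∧
      ∀ k l : Fin n, k < l → σ (fe n k) < σ (fe n l) := by
  simp [matchingPerms]

lemma pf_eq_sum_pfTerm (B : Matrix (Fin (2 * n)) (Fin (2 * n)) R) :
    pf B = ∑ σ ∈ matchingPerms n, pfTerm B σ := rfl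

def pairPerm (π : Perm (Fin n)) (ε : Fin n → Perm Bool) : Perm (Fin (2 * n)) :=
  (pairEquiv n).permCongr (prodCongrRight ε * prodCongrLeft fun _ => π)

lemma pairPerm_pairEquiv (π : Perm (Fin n)) (ε : Fin n → Perm Bool) (p : Fin n × Bool) :
    pairPerm π ε (pairEquiv n p) = pairEquiv n (π p.1, ε (π p.1) p.2) := by
  rw [pairPerm, permCongr_apply, symm_apply_apply]
  rfl

lemma pairPerm_fe (π : Perm (Fin n)) (ε : Fin n → Perm Bool) (k : Fin n) :
    pairPerm π ε (fe n k) = pairEquiv n (π k, ε (π k) false) :=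
  pairPerm_pairEquiv π ε (k, false)

lemma pairPerm_fo (π : Perm (Fin n)) (ε : Fin n → Perm Bool) (k : Fin n) :
    pairPerm π ε (fo n k) = pairEquiv n (π k, ε (π k) true) :=
  pairPerm_pairEquiv π ε (k, true)

lemma sign_pairPerm (π : Perm (Fin n)) (ε : Fin n → Perm Bool) :
    sign (pairPerm π ε) = ∏ k, sign (ε k) := by
  rw [pairPerm, sign_permCongr, Perm.sign_mul, sign_prodCongrRight, sign_prodCongrLeft,
    Fintype.prod_bool, Int.units_mul_self, mul_one]

lemma perm_bool_eq_one_or_eq_swap (e : Perm Bool) : e = 1 ∨ e = swap false true := by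
  have hne : e false ≠ e true := e.injective.ne Bool.false_ne_true
  cases h : e false
  · left; ext b; cases b <;> simp_all
  · right; ext b; cases b <;> simp_all

lemma apply_perm_bool {ι : Type*} {B : Matrix ι ι R} (hB : Bᵀ = -B) (f : Bool → ι)
    (e : Perm Bool) : B (f (e false)) (f (e true)) = ((sign e : ℤ) : R) * B (f false) (f true) := by
  rcases perm_bool_eq_one_or_eq_swap e with rfl | rfl
  · simp only [Perm.one_apply, Perm.sign_one, Units.val_one, Int.cast_one, one_mul]
  · rw [swap_apply_left, swap_apply_right, sign_swap Bool.false_ne_true,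
      apply_eq_neg_of_transpose_eq_neg hB]
    simp

lemma pfTerm_mul_pairPerm {B : Matrix (Fin (2 * n)) (Fin (2 * n)) R} (hB : Bᵀ = -B)
    (μ : Perm (Fin (2 * n))) (π : Perm (Fin n)) (ε : Fin n → Perm Bool) :
    pfTerm B (μ * pairPerm π ε) = pfTerm B μ := by
  have hprod : ∏ k, B ((μ * pairPerm π ε) (fe n k)) ((μ * pairPerm π ε) (fo n k)) =
      ∏ k, ((sign (ε k) : ℤ) : R) * B (μ (fe n k)) (μ (fo n k)) := by
    simp only [Perm.mul_apply, pairPerm_fe, pairPerm_fo]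
    rw [Equiv.prod_comp π fun k =>
      B (μ (pairEquiv n (k, ε k false))) (μ (pairEquiv n (k, ε k true)))]
    exact prod_congr rfl fun k _ => apply_perm_bool hB (fun b => μ (pairEquiv n (k, b))) (ε k)
  rw [pfTerm, pfTerm, hprod, prod_mul_distrib, Perm.sign_mul, sign_pairPerm]
  push_cast
  rw [mul_assoc, ← mul_assoc (∏ k, _), ← prod_mul_distrib]
  simp [intCast_units_mul_self]

/-- The hyperoctahedral group. -/
def pairStabilizer (n : ℕ) : Subgroup (Perm (Fin (2 * n))) where
  carrier := {h | ∀ i j, pairIdx (h i) = pairIdx (h j) ↔ pairIdx i = pairIdx j}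
  mul_mem' hg hh i j := (hg _ _).trans (hh i j)
  one_mem' _ _ := Iff.rfl
  inv_mem' {h} hh i j := by simpa using (hh (h⁻¹ i) (h⁻¹ j)).symm

lemma pairPerm_mem_pairStabilizer (π : Perm (Fin n)) (ε : Fin n → Perm Bool) :
    pairPerm π ε ∈ pairStabilizer n := by
  have h : ∀ i, pairIdx (pairPerm π ε i) = π (pairIdx i) := by
    intro i
    obtain ⟨p, rfl⟩ := (pairEquiv n).surjective i
    simp [pairPerm_pairEquiv]
  intro i j
  rw [h, h, π.injective.eq_iff]

lemma pairIdx_eq_of_swap_mem {a b : Fin (2 * n)} (hswap : swap a b ∈ pairStabilizer n) :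
    pairIdx a = pairIdx b := by
  obtain ⟨c, hca, hc⟩ := exists_ne_pairIdx_eq a
  by_cases hcb : c = b
  · rw [← hcb, hc]
  · have := (hswap c a).mpr hc
    rwa [swap_apply_of_ne_of_ne hca hcb, swap_apply_left, hc] at this

/-- The normal form of `μ` in its coset `μ * pairStabilizer n`: orient every pair
increasingly under `μ`, then sort the pairs by their smaller `μ`-values. -/
def canon (μ : Perm (Fin (2 * n))) : Perm (Fin (2 * n)) :=
  μ * pairPerm (Tuple.sort fun k => min (μ (fe n k)) (μ (fo n k)))
    (fun k => if μ (fe n k) < μ (fo n k) then 1 else swap false true)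

lemma canon_mem_matchingPerms (μ : Perm (Fin (2 * n))) : canon μ ∈ matchingPerms n := by
  set m : Fin n → Fin (2 * n) := fun k => min (μ (fe n k)) (μ (fo n k))
  set π := Tuple.sort m
  have hfe : ∀ k, canon μ (fe n k) = m (π k) := by
    intro k
    rw [canon, Perm.mul_apply, pairPerm_fe]
    split_ifs with h
    · exact (min_eq_left h.le).symm
    · exact (min_eq_right (not_lt.mp h)).symm
  have hfo : ∀ k, canon μ (fo n k) = max (μ (fe n (π k))) (μ (fo n (π k))) := by
    intro k
    rw [canon, Perm.mul_apply, pairPerm_fo]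
    split_ifs with h
    · exact (max_eq_right h.le).symm
    · exact (max_eq_left (not_lt.mp h)).symm
  have hm : Function.Injective m := by
    have : ∀ k, pairIdx (μ.symm (m k)) = k := fun k => by
      rcases min_choice (μ (fe n k)) (μ (fo n k)) with h | h <;> simp [m, h]
    exact fun k l hkl => by rw [← this k, hkl, this l]
  refine mem_matchingPerms.mpr ⟨fun k => ?_, fun k l hkl => ?_⟩
  · rw [hfe, hfo]
    exact min_lt_max.mpr (μ.injective.ne (fe_ne_fo _ _))
  · rw [hfe, hfe]
    exact (Tuple.monotone_sort m).strictMono_of_injective (hm.comp π.injective) hkl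

lemma canon_eq_mul (μ : Perm (Fin (2 * n))) : ∃ h ∈ pairStabilizer n, canon μ = μ * h :=
  ⟨_, pairPerm_mem_pairStabilizer _ _, rfl⟩

lemma pfTerm_canon {B : Matrix (Fin (2 * n)) (Fin (2 * n)) R} (hB : Bᵀ = -B)
    (μ : Perm (Fin (2 * n))) : pfTerm B (canon μ) = pfTerm B μ :=
  pfTerm_mul_pairPerm hB μ _ _

lemma eq_of_mem_matchingPerms_of_eq_mul {σ τ h : Perm (Fin (2 * n))} (hσ : σ ∈ matchingPerms n)
    (hτ : τ ∈ matchingPerms n) (hh : h ∈ pairStabilizer n) (hτσ : τ = σ * h) : τ = σ := by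
  rw [mem_matchingPerms] at hσ hτ
  set p : Fin n → Fin n := fun k => pairIdx (h (fe n k))
  -- `τ` orients the pair `k` as `σ` orients the pair `p k`, so `h` cannot swap it
  have hpair : ∀ k, h (fe n k) = fe n (p k) ∧ h (fo n k) = fo n (p k) := by
    intro k
    have hidx : pairIdx (h (fe n k)) = pairIdx (h (fo n k)) := by simp [(hh _ _)]
    refine (eq_fe_fo_or_eq_fo_fe (h.injective.ne (fe_ne_fo k k)) hidx).resolve_right ?_
    rintro ⟨h1, h2⟩
    have := hτ.1 k
    rw [hτσ, Perm.mul_apply, Perm.mul_apply, h1, h2] at this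
    exact (hσ.1 _).not_gt this
  have hp : p = id := by
    refine StrictMono.eq_id fun k l hkl => ?_
    have := hτ.2 k l hkl
    rwa [hτσ, Perm.mul_apply, Perm.mul_apply, (hpair k).1, (hpair l).1,
      (StrictMono.lt_iff_lt fun k l => hσ.2 k l)] at this
  rw [hτσ]
  ext i : 1
  obtain ⟨⟨k, _ | _⟩, rfl⟩ := (pairEquiv n).surjective i
  · simp [(hpair k).1, hp]
  · simp [(hpair k).2, hp]

lemma canon_mul_eq {σ h : Perm (Fin (2 * n))} (hσ : σ ∈ matchingPerms n)
    (hh : h ∈ pairStabilizer n) : canon (σ * h) = σ := by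
  obtain ⟨h', hh', heq⟩ := canon_eq_mul (σ * h)
  exact eq_of_mem_matchingPerms_of_eq_mul hσ (canon_mem_matchingPerms _)
    (mul_mem hh hh') (by rw [heq, mul_assoc])

lemma canon_inv_mul_canon_mul (ρ : Perm (Fin (2 * n))) {σ : Perm (Fin (2 * n))}
    (hσ : σ ∈ matchingPerms n) : canon (ρ⁻¹ * canon (ρ * σ)) = σ := by
  obtain ⟨h, hh, heq⟩ := canon_eq_mul (ρ * σ)
  rw [heq, ← mul_assoc, inv_mul_cancel_left]
  exact canon_mul_eq hσ hh

lemma pfTerm_submatrix (B : Matrix (Fin (2 * n)) (Fin (2 * n)) R) (ρ σ : Perm (Fin (2 * n))) :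
    pfTerm (B.submatrix ρ ρ) σ = ((sign ρ : ℤ) : R) * pfTerm B (ρ * σ) := by
  simp only [pfTerm, submatrix_apply, Perm.mul_apply, Perm.sign_mul, Units.val_mul, Int.cast_mul]
  rw [← mul_assoc, ← mul_assoc, intCast_units_mul_self, one_mul]

theorem pf_submatrix_perm {B : Matrix (Fin (2 * n)) (Fin (2 * n)) R} (hB : Bᵀ = -B)
    (ρ : Perm (Fin (2 * n))) : pf (B.submatrix ρ ρ) = ((sign ρ : ℤ) : R) * pf B := by
  simp only [pf_eq_sum_pfTerm, pfTerm_submatrix, ← mul_sum]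
  congr 1
  exact sum_nbij' (fun σ => canon (ρ * σ)) (fun τ => canon (ρ⁻¹ * τ))
    (fun _ _ => canon_mem_matchingPerms _) (fun _ _ => canon_mem_matchingPerms _)
    (fun _ hσ => canon_inv_mul_canon_mul ρ hσ)
    (fun _ hτ => by simpa using canon_inv_mul_canon_mul ρ⁻¹ hτ)
    (fun _ _ => (pfTerm_canon hB _).symm)

lemma submatrix_swap_eq_self {ι : Type*} [DecidableEq ι] {B : Matrix ι ι R} (hB : Bᵀ = -B)
    {i j : ι} (hrow : B i = B j) : B.submatrix (swap i j) (swap i j) = B := by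
  have hrow' : ∀ x, B (swap i j x) = B x := by
    intro x
    rcases eq_or_ne x i with rfl | hxi
    · rw [swap_apply_left, hrow]
    rcases eq_or_ne x j with rfl | hxj
    · rw [swap_apply_right, hrow]
    · rw [swap_apply_of_ne_of_ne hxi hxj]
  ext x y
  rw [submatrix_apply, hrow', apply_eq_neg_of_transpose_eq_neg hB, hrow',
    ← apply_eq_neg_of_transpose_eq_neg hB]

lemma pfTerm_swap_mul {B : Matrix (Fin (2 * n)) (Fin (2 * n)) R} (hB : Bᵀ = -B)
    {i j : Fin (2 * n)} (hij : i ≠ j) (hrow : B i = B j) (σ : Perm (Fin (2 * n))) :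
    pfTerm B (swap i j * σ) = -pfTerm B σ := by
  have := pfTerm_submatrix B (swap i j) σ
  rw [submatrix_swap_eq_self hB hrow, sign_swap hij] at this
  simp [this]

lemma pairIdx_inv_eq_of_canon_swap_mul_eq {σ : Perm (Fin (2 * n))} {i j : Fin (2 * n)}
    (hσ : canon (swap i j * σ) = σ) : pairIdx (σ⁻¹ i) = pairIdx (σ⁻¹ j) := by
  obtain ⟨h, hh, heq⟩ := canon_eq_mul (swap i j * σ)
  refine pairIdx_eq_of_swap_mem ?_
  have : swap (σ⁻¹ i) (σ⁻¹ j) = h⁻¹ := by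
    calc swap (σ⁻¹ i) (σ⁻¹ j) = σ⁻¹ * (swap i j * σ * h) * h⁻¹ := by
          rw [swap_apply_apply]; group
      _ = h⁻¹ := by rw [← heq, hσ]; group
  rw [this]
  exact inv_mem hh

lemma pfTerm_eq_zero_of_pairIdx_eq {B : Matrix (Fin (2 * n)) (Fin (2 * n)) R} (hB : Bᵀ = -B)
    {i j : Fin (2 * n)} (hij : i ≠ j) (h0 : B i j = 0) {σ : Perm (Fin (2 * n))}
    (hσ : pairIdx (σ⁻¹ i) = pairIdx (σ⁻¹ j)) : pfTerm B σ = 0 := by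
  have hk : B (σ (fe n (pairIdx (σ⁻¹ i)))) (σ (fo n (pairIdx (σ⁻¹ i)))) = 0 := by
    rcases eq_fe_fo_or_eq_fo_fe (σ⁻¹.injective.ne hij) hσ with ⟨h1, h2⟩ | ⟨h1, h2⟩
    · rw [← h1, ← h2]
      simpa using h0
    · rw [← h1, ← h2]
      simpa [apply_eq_neg_of_transpose_eq_neg hB i j] using h0
  exact mul_eq_zero_of_right _ (prod_eq_zero (mem_univ _) hk)

theorem pf_eq_zero_of_row_eq {B : Matrix (Fin (2 * n)) (Fin (2 * n)) R} (hB : Bᵀ = -B)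
    {i j : Fin (2 * n)} (hij : i ≠ j) (hrow : B i = B j) (h0 : B i j = 0) : pf B = 0 := by
  rw [pf_eq_sum_pfTerm]
  refine sum_involution (fun σ _ => canon (swap i j * σ)) (fun σ _ => ?_)
    (fun σ _ hne hfix => hne ?_) (fun _ _ => canon_mem_matchingPerms _)
    (fun _ hσ => by simpa using canon_inv_mul_canon_mul (swap i j) hσ)
  · rw [pfTerm_canon hB, pfTerm_swap_mul hB hij hrow, add_neg_cancel]
  · exact pfTerm_eq_zero_of_pairIdx_eq hB hij h0 (pairIdx_inv_eq_of_canon_swap_mul_eq hfix)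

lemma prod_pairs {ι κ M : Type*} [Fintype ι] [Fintype κ] [CommMonoid M] (e : κ × Bool ≃ ι)
    (f : ι → M) : ∏ i, f i = ∏ k, f (e (k, false)) * f (e (k, true)) := by
  rw [← e.prod_comp, Fintype.prod_prod_type]
  simp [mul_comm]

lemma sum_prod_pairs {ι κ α : Type*} [Fintype ι] [DecidableEq ι] [Fintype κ] [DecidableEq κ]
    [Fintype α] (e : κ × Bool ≃ ι) (F : κ → α → α → R) :
    ∑ g : ι → α, ∏ k, F k (g (e (k, false))) (g (e (k, true))) = ∏ k, ∑ a, ∑ b, F k a b := by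
  calc ∑ g : ι → α, ∏ k, F k (g (e (k, false))) (g (e (k, true)))
      = ∑ G : κ → Bool → α, ∏ k, F k (G k false) (G k true) :=
        Fintype.sum_equiv ((e.arrowCongr (Equiv.refl α)).symm.trans (Equiv.curry κ Bool α)) _ _
          fun g => by simp
    _ = ∏ k, ∑ f : Bool → α, F k (f false) (f true) :=
        (Fintype.prod_sum fun k (f : Bool → α) => F k (f false) (f true)).symm
    _ = ∏ k, ∑ a, ∑ b, F k a b := by
        refine prod_congr rfl fun k _ => ?_
        rw [← Fintype.sum_prod_type']
        exact Fintype.sum_equiv (boolArrowEquivProd α) _ _ fun f => rfl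

lemma mul_mul_transpose_apply {m ι : Type*} [Fintype ι] (T : Matrix m ι R) (A : Matrix ι ι R)
    (x y : m) :
    (T * A * Tᵀ) x y = ∑ a, ∑ b, T x a * A a b * T y b := by
  simp only [Matrix.mul_apply, transpose_apply, sum_mul]
  exact sum_comm

theorem pf_mul_mul_transpose {ι : Type*} [Fintype ι] [DecidableEq ι] (T : Matrix (Fin (2 * n)) ι R)
    (A : Matrix ι ι R) :
    pf (T * A * Tᵀ) = ∑ g : Fin (2 * n) → ι, (∏ i, T i (g i)) * pf (A.submatrix g g) := by
  have hterm : ∀ σ : Perm (Fin (2 * n)), pfTerm (T * A * Tᵀ) σ =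
      ∑ g : Fin (2 * n) → ι, (∏ i, T i (g i)) * pfTerm (A.submatrix g g) σ := by
    intro σ
    let e := (pairEquiv n).trans σ
    have := sum_prod_pairs e fun k a b => T (σ (fe n k)) a * A a b * T (σ (fo n k)) b
    simp only [pfTerm, mul_mul_transpose_apply, ← this, mul_sum, submatrix_apply]
    refine sum_congr rfl fun g _ => ?_
    rw [prod_pairs e fun i => T i (g i)]
    simp only [trans_apply, pairEquiv_false, pairEquiv_true, prod_mul_distrib, e]
    ring
  simp only [pf_eq_sum_pfTerm, hterm, mul_sum]
  rw [sum_comm]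

theorem sum_injective_eq_sum_orderEmbOfFin {ι M : Type*} [Fintype ι] [LinearOrder ι]
    [AddCommMonoid M] {m : ℕ} (f : (Fin m → ι) → M) :
    ∑ g with Function.Injective g, f g =
      ∑ S : {S : Finset ι // S.card = m}, ∑ σ : Perm (Fin m), f (S.1.orderEmbOfFin S.2 ∘ σ) := by
  rw [← Fintype.sum_prod_type']
  symm
  refine sum_bij (fun p _ => p.1.1.orderEmbOfFin p.1.2 ∘ p.2)
    (fun p _ => mem_filter.mpr
      ⟨mem_univ _, (p.1.1.orderEmbOfFin p.1.2).injective.comp p.2.injective⟩)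
    ?_ ?_ fun _ _ => rfl
  · rintro ⟨⟨S, hS⟩, σ⟩ - ⟨⟨S', hS'⟩, σ'⟩ - h
    have hSS : S = S' := by
      have := congrArg Set.range h
      rwa [σ.surjective.range_comp, σ'.surjective.range_comp, range_orderEmbOfFin,
        range_orderEmbOfFin, coe_inj] at this
    subst hSS
    have hσ : σ = σ' := Equiv.ext fun i => (S.orderEmbOfFin hS).injective (congrFun h i)
    rw [hσ]
  · intro g hg
    have hinj : Function.Injective g := (mem_filter.mp hg).2
    have hS : (univ.image g).card = m := by rw [card_image_of_injective _ hinj, card_fin]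
    have hmem : ∀ i, ∃ j, (univ.image g).orderEmbOfFin hS j = g i := fun i => by
      rw [← Set.mem_range, range_orderEmbOfFin]
      exact mem_coe.mpr (mem_image_of_mem g (mem_univ i))
    choose ρ hρ using hmem
    have hρinj : Function.Injective ρ := fun i j hij => hinj (by rw [← hρ i, ← hρ j, hij])
    exact ⟨(⟨_, hS⟩, Equiv.ofBijective ρ (Finite.injective_iff_bijective.mp hρinj)), mem_univ _,
      funext hρ⟩

lemma pf_submatrix_eq_zero_of_not_injective {ι : Type*} {A : Matrix ι ι R} (hA : Aᵀ = -A)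
    (hA0 : ∀ a, A a a = 0) {g : Fin (2 * n) → ι} (hg : ¬ Function.Injective g) :
    pf (A.submatrix g g) = 0 := by
  obtain ⟨i, j, hgij, hij⟩ : ∃ i j, g i = g j ∧ i ≠ j := by
    simpa [Function.Injective] using hg
  exact pf_eq_zero_of_row_eq (transpose_submatrix_eq_neg hA g) hij (funext fun x => by simp [hgij])
    (by simp [hgij, hA0])

lemma det_submatrix_eq_sum {m ι : Type*} [Fintype m] [DecidableEq m] (T : Matrix m ι R)
    (e : m → ι) :
    (T.submatrix id e).det = ∑ σ : Perm m, ((sign σ : ℤ) : R) * ∏ i, T i (e (σ i)) := by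
  rw [← det_transpose, det_apply']
  rfl

end Pfaffian

open Pfaffian Finset in
theorem pfaffian_cauchy_binet_general {R : Type*} [CommRing R] (n M : ℕ)
    (T : Matrix (Fin (2 * n)) (Fin M) R) (A : Matrix (Fin M) (Fin M) R)
    (hA : Aᵀ = -A) (hA0 : ∀ i, A i i = 0) :
    ∑ S : {S : Finset (Fin M) // S.card = 2 * n},
      pf (A.submatrix (fun i => S.1.orderEmbOfFin S.2 i) (fun j => S.1.orderEmbOfFin S.2 j)) *
        (T.submatrix id (fun j => S.1.orderEmbOfFin S.2 j)).det =
      pf (T * A * Tᵀ) := by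
  symm
  rw [pf_mul_mul_transpose, ← sum_filter_of_ne (p := Function.Injective) fun g _ hg => ?_,
    sum_injective_eq_sum_orderEmbOfFin]
  · refine sum_congr rfl fun S _ => ?_
    rw [det_submatrix_eq_sum, mul_sum]
    refine sum_congr rfl fun σ _ => ?_
    rw [← submatrix_submatrix, pf_submatrix_perm (transpose_submatrix_eq_neg hA _)]
    simp only [Function.comp_apply]
    ring
  · by_contra hinj
    exact hg (by rw [pf_submatrix_eq_zero_of_not_injective hA hA0 hinj, mul_zero])

/-- **Pfaffian analogue of the Cauchy–Binet identity** (Ishikawa–Wakayama).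
For an even number `m = 2n`, `m ≤ M`, an `m × M` matrix `T` and an antisymmetric `M × M`
matrix `A` over a commutative ring:
`Σ_{S ⊆ [M], |S| = m} Pf(A_S) · det(T_S) = Pf(T A Tᵗ)`,
where `A_S` (resp. `T_S`) is the submatrix with rows and columns (resp. columns)
indexed by `S` in increasing order. -/
theorem pfaffian_cauchy_binet {R : Type*} [CommRing R] (n M : ℕ) (hM : 2 * n ≤ M)
    (T : Matrix (Fin (2 * n)) (Fin M) R) (A : Matrix (Fin M) (Fin M) R)
    (hA : Aᵀ = -A) (hA0 : ∀ i, A i i = 0) :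
    ∑ S : {S : Finset (Fin M) // S.card = 2 * n},
      pf (A.submatrix (fun i => S.1.orderEmbOfFin S.2 i) (fun j => S.1.orderEmbOfFin S.2 j)) *
        (T.submatrix id (fun j => S.1.orderEmbOfFin S.2 j)).det =
      pf (T * A * Tᵀ) :=
  pfaffian_cauchy_binet_general n M T A hA hA0
end
end

section
/- Let 1 ≤ s_1 < s_2 < ⋯ < s_{2n} be integers, and let M be the 2n×2n antisymmetric matrix with entries M_{ij} = δ_{s_i + 1, s_j} (1 − t^{s_i}) for i < j. Then Pf(M) = ∏_{k=1}^{n} (1 − t^{s_{2k−1}}) if s_{2k} = s_{2k−1} + 1 for all 1 ≤ k ≤ n, and Pf(M) = 0 otherwise. Equivalently, Pf[ δ_{s_i+1,s_j}(1−t^{s_i}) ]_{1≤i<j≤2n} = ∏_{i=2,4,6,…,2n} (1−t^{s_{i−1}}) δ_{s_{i−1}, s_i − 1}. -/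
noncomputable section

open scoped BigOperators

/-- For integers `1 ≤ s₁ < s₂ < ⋯ < s_{2n}`, the Pfaffian of the antisymmetric matrix with
entries `M_{ij} = δ_{sᵢ+1,sⱼ} (1 - t^{sᵢ})` for `i < j` factorizes:
`Pf[δ_{sᵢ+1,sⱼ}(1-t^{sᵢ})] = ∏_{i=2,4,…,2n} (1-t^{s_{i-1}}) δ_{s_{i-1}, s_i - 1}`. -/
theorem pfaffian_delta_factorization {R : Type*} [CommRing R] (n : ℕ) (t : R)
    (s : Fin (2 * n) → ℕ) (hs : StrictMono s) (hs1 : ∀ i, 1 ≤ s i) :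
    pf (Matrix.of fun i j : Fin (2 * n) =>
        if i < j then (if s i + 1 = s j then 1 - t ^ s i else 0)
        else if j < i then -(if s j + 1 = s i then 1 - t ^ s j else 0)
        else 0) =
      ∏ k : Fin n, if s (fe n k) + 1 = s (fo n k) then 1 - t ^ s (fe n k) else 0 := by
  classical
  have key : ∀ i j : Fin (2 * n), i < j → s i + 1 = s j → (j : ℕ) = (i : ℕ) + 1 := by
    intro i j hij hsij
    by_contra h
    have hij' : (i : ℕ) + 1 < (j : ℕ) := by
      have := Fin.lt_def.mp hij; omega
    have hm : (i : ℕ) + 1 < 2 * n := lt_trans hij' j.isLt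
    have h1 : s i < s ⟨(i : ℕ) + 1, hm⟩ := hs (by simp [Fin.lt_def])
    have h2 : s ⟨(i : ℕ) + 1, hm⟩ < s j := hs (by simp only [Fin.lt_def]; exact hij')
    omega
  have hfefo : ∀ k : Fin n, fe n k < fo n k := fun k => by
    simp [fe, fo, Fin.lt_def]
  have hone : (1 : Equiv.Perm (Fin (2 * n))) ∈ Finset.univ.filter
      (fun σ : Equiv.Perm (Fin (2 * n)) =>
        (∀ k : Fin n, σ (fe n k) < σ (fo n k)) ∧
          ∀ k l : Fin n, k < l → σ (fe n k) < σ (fe n l)) := by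
    refine Finset.mem_filter.mpr ⟨Finset.mem_univ _, fun k => ?_, fun k l hkl => ?_⟩
    · exact hfefo k
    · have := Fin.lt_def.mp hkl
      simp only [Equiv.Perm.coe_one, id_eq, fe, Fin.lt_def]
      omega
  unfold pf
  rw [Finset.sum_eq_single (1 : Equiv.Perm (Fin (2 * n)))]
  · simp only [Equiv.Perm.coe_one, id_eq, map_one, Units.val_one, Int.cast_one, one_mul,
      Matrix.of_apply]
    exact Finset.prod_congr rfl fun k _ => if_pos (hfefo k)
  · intro σ hσ hne
    obtain ⟨-, hσ1, hσ2⟩ := Finset.mem_filter.mp hσ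
    by_cases hall : ∀ k : Fin n, s (σ (fe n k)) + 1 = s (σ (fo n k))
    · -- derive σ = 1, contradiction
      exfalso
      apply hne
      have hstep : ∀ k : Fin n, (σ (fo n k) : ℕ) = (σ (fe n k) : ℕ) + 1 :=
        fun k => key _ _ (hσ1 k) (hall k)
      set aval : Fin n → ℕ := fun k => (σ (fe n k) : ℕ) with haval
      have L1 : ∀ k l : Fin n, (k : ℕ) + 1 = (l : ℕ) → aval k + 2 ≤ aval l := by
        intro k l hkl
        have hlt : aval k < aval l := Fin.lt_def.mp (hσ2 k l (Fin.lt_def.mpr (by omega)))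
        have hneq : σ (fe n l) ≠ σ (fo n k) := by
          intro h
          have h2 := σ.injective h
          have : (fe n l : ℕ) = (fo n k : ℕ) := by rw [h2]
          simp only [fe, fo] at this
          omega
        have : aval l ≠ aval k + 1 := by
          intro h
          apply hneq
          apply Fin.ext
          rw [hstep k]
          exact h
        omega
      have L2 : ∀ d : ℕ, ∀ k : Fin n, ∀ h : (k : ℕ) + d < n,
          aval k + 2 * d ≤ aval ⟨(k : ℕ) + d, h⟩ := by
        intro d
        induction d with
        | zero => intro k h; simp
        | succ d ih =>
          intro k h
          have h' : (k : ℕ) + d < n := by omega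
          have := ih k h'
          have := L1 ⟨(k : ℕ) + d, h'⟩ ⟨(k : ℕ) + d + 1, by omega⟩ rfl
          have heq : (⟨(k : ℕ) + (d + 1), h⟩ : Fin n) = ⟨(k : ℕ) + d + 1, by omega⟩ := by
            apply Fin.ext; simp; omega
          rw [heq]
          omega
      have npos : ∀ _ : Fin n, 0 < n := fun k => by have := k.isLt; omega
      have hval : ∀ k : Fin n, aval k = 2 * (k : ℕ) := by
        intro k
        have h0 : 0 < n := npos k
        have hlow : 2 * (k : ℕ) ≤ aval k := by
          have := L2 (k : ℕ) ⟨0, h0⟩ (by simpa using k.isLt)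
          have heq : (⟨(0 : ℕ) + (k : ℕ), by simpa using k.isLt⟩ : Fin n) = k := by
            apply Fin.ext; simp
          rw [heq] at this
          omega
        have hhigh : aval k ≤ 2 * (k : ℕ) := by
          have hd : (k : ℕ) + (n - 1 - (k : ℕ)) < n := by have := k.isLt; omega
          have := L2 (n - 1 - (k : ℕ)) k hd
          have hlast : aval ⟨(k : ℕ) + (n - 1 - (k : ℕ)), hd⟩ + 1 < 2 * n := by
            rw [← hstep ⟨(k : ℕ) + (n - 1 - (k : ℕ)), hd⟩]
            exact (σ (fo n ⟨(k : ℕ) + (n - 1 - (k : ℕ)), hd⟩)).isLt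
          have := k.isLt
          omega
        omega
      have hfe : ∀ k : Fin n, σ (fe n k) = fe n k := by
        intro k; apply Fin.ext; exact hval k
      have hfo : ∀ k : Fin n, σ (fo n k) = fo n k := by
        intro k; apply Fin.ext
        rw [hstep k]
        show aval k + 1 = _
        rw [hval k]; rfl
      apply Equiv.ext
      intro x
      rcases Nat.even_or_odd (x : ℕ) with ⟨m, hm⟩ | ⟨m, hm⟩
      · have hmn : m < n := by have := x.isLt; omega
        have hx : x = fe n ⟨m, hmn⟩ := by apply Fin.ext; simp [fe]; omega
        rw [hx]; exact hfe _
      · have hmn : m < n := by have := x.isLt; omega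
        have hx : x = fo n ⟨m, hmn⟩ := by apply Fin.ext; simp [fo]; omega
        rw [hx]; exact hfo _
    · push_neg at hall
      obtain ⟨k, hk⟩ := hall
      have : (∏ k : Fin n, (Matrix.of fun i j : Fin (2 * n) =>
          if i < j then (if s i + 1 = s j then 1 - t ^ s i else 0)
          else if j < i then -(if s j + 1 = s i then 1 - t ^ s j else 0)
          else 0) (σ (fe n k)) (σ (fo n k))) = 0 := by
        apply Finset.prod_eq_zero (Finset.mem_univ k)
        simp only [Matrix.of_apply]
        rw [if_pos (hσ1 k), if_neg hk]
      rw [this, mul_zero]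
  · intro h
    exact absurd hone h
end
end

section
/- Let 0 ≤ m < n and write ȳ_j = 1/y_j. Then det[ (1−t) / ((1−x_i y_j)(1−t x_i y_j)(1−x_i ȳ_j)(1−t x_i ȳ_j)) ]_{1≤i,j≤n} = ( ∏_{m+1≤i<j≤n} (x_i − x_j) / ∏_{i=m+1}^{n} (1−t x_i^2) ) · det[ 𝒰_{i,j} ]_{1≤i,j≤n}, where 𝒰_{i,j} = (1−t)/((1−x_i y_j)(1−t x_i y_j)(1−x_i ȳ_j)(1−t x_i ȳ_j)) for 1 ≤ i ≤ m, and 𝒰_{i,j} = Σ_{k=0}^{∞} (1−t^{k+1}) h_{k+i−n}(x_i, x_{i+1},…,x_n) · (y_j^{k+1} − ȳ_j^{k+1})/(y_j − ȳ_j) for m+1 ≤ i ≤ n, as an identity of formal power series in x_1,…,x_n whose coefficients are rational functions of y_1,…,y_n and t. -/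
noncomputable section

open scoped BigOperators

/-- The complete homogeneous symmetric polynomial `h_k(z₁,…,z_r)`, as a sum of all
monomials of total degree `k`. -/
def hsym {R : Type*} [CommSemiring R] (r k : ℕ) (z : Fin r → R) : R :=
  ∑ d ∈ Finset.Nat.antidiagonalTuple r k, ∏ i : Fin r, z i ^ d i

/-!
Expanding `(1 - t x²) K(x, y)` as the power series
`∑ₖ (1 - t^{k+1}) xᵏ (y^{k+1} - ȳ^{k+1}) / (y - ȳ)` and using the Lagrange identity
`∑ₗ x_lᵏ / ∏_{p ≠ l} (x_l - x_p) = h_{k+1-r}(x₁, …, x_r)`, each row `i ≥ m` of `𝒰` (rows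
indexed from `0`) becomes the combination of the rows `l ≥ i` of the kernel matrix `K` with
coefficients `(1 - t x_l²) / ∏_{p ≥ i, p ≠ l} (x_l - x_p)`. Thus `𝒰 = L · diag(1 - t x_i²) · K`
with `L` upper triangular of determinant `∏_{m ≤ i < j} (x_i - x_j)⁻¹`. When the `x_i` with
`i ≥ m` are not distinct, `K` has two equal rows and both sides vanish.
-/

open Finset Lagrange

lemma Finset.Nat.sum_antidiagonalTuple_succ {M : Type*} [AddCommMonoid M] (r n : ℕ)
    (g : (Fin (r + 1) → ℕ) → M) :
    ∑ f ∈ Nat.antidiagonalTuple (r + 1) n, g f =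
      ∑ p ∈ antidiagonal n, ∑ f ∈ Nat.antidiagonalTuple r p.2, g (Fin.cons p.1 f) := by
  change ((List.Nat.antidiagonalTuple (r + 1) n).map g).sum =
    ((List.Nat.antidiagonal n).map fun p =>
      ((List.Nat.antidiagonalTuple r p.2).map fun f => g (Fin.cons p.1 f)).sum).sum
  simp only [List.Nat.antidiagonalTuple, List.flatMap, List.map_flatten, List.sum_flatten,
    List.map_map, Function.comp_def]

section CompleteHomogeneous

variable {R : Type*} [CommSemiring R]

@[simp]
lemma hsym_zero_right (r : ℕ) (z : Fin r → R) : hsym r 0 z = 1 := by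
  simp [hsym, Finset.Nat.antidiagonalTuple_zero_right]

@[simp]
lemma hsym_zero_succ (k : ℕ) (z : Fin 0 → R) : hsym 0 (k + 1) z = 0 := by
  simp [hsym]

lemma hsym_succ (r k : ℕ) (z : Fin (r + 1) → R) :
    hsym (r + 1) k z = ∑ p ∈ antidiagonal k, z 0 ^ p.1 * hsym r p.2 (Fin.tail z) := by
  simp only [hsym, Finset.Nat.sum_antidiagonalTuple_succ, Fin.prod_univ_succ, Fin.cons_zero,
    Fin.cons_succ, mul_sum, Fin.tail]

lemma hsym_succ_succ (r k : ℕ) (z : Fin (r + 1) → R) :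
    hsym (r + 1) (k + 1) z = z 0 * hsym (r + 1) k z + hsym r (k + 1) (Fin.tail z) := by
  rw [hsym_succ, hsym_succ, Finset.Nat.sum_antidiagonal_succ, mul_sum, add_comm]
  simp only [pow_zero, one_mul, pow_succ, mul_assoc, mul_left_comm (z 0)]

end CompleteHomogeneous

section NodalWeight

variable {F : Type*} [Field F]

lemma Lagrange.nodalWeight_map {ι κ : Type*} [DecidableEq ι] [DecidableEq κ] (e : ι ↪ κ)
    (s : Finset ι) (v : κ → F) (i : ι) :
    nodalWeight (s.map e) v (e i) = nodalWeight s (v ∘ e) i := by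
  rw [nodalWeight, nodalWeight, ← map_erase, prod_map]
  rfl

lemma Lagrange.nodalWeight_univ_succ {r : ℕ} (x : Fin (r + 1) → F) (l : Fin r) :
    nodalWeight univ x l.succ = (x l.succ - x 0)⁻¹ * nodalWeight univ (Fin.tail x) l := by
  have herase : (univ.map ⟨Fin.succ, Fin.succ_injective r⟩).erase l.succ =
      (univ.erase l).map ⟨Fin.succ, Fin.succ_injective r⟩ := (map_erase _ _ _).symm
  rw [nodalWeight, Fin.univ_succ, erase_cons_of_ne _ (Fin.succ_ne_zero l).symm, prod_cons,
    herase, prod_map, nodalWeight]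
  rfl

lemma Lagrange.sum_nodalWeight {ι : Type*} [DecidableEq ι] {s : Finset ι} {v : ι → F}
    (hvs : Set.InjOn v s) (hs : s.Nonempty) :
    ∑ i ∈ s, nodalWeight s v i = if #s = 1 then 1 else 0 := by
  have h := coeff_eq_sum hvs (P := 1)
    (by rw [Polynomial.degree_one]; exact_mod_cast hs.card_pos)
  simp only [Polynomial.coeff_one, Polynomial.eval_one, one_div] at h
  simp only [nodalWeight, prod_inv_distrib, ← h, Nat.sub_eq_iff_eq_add hs.card_pos, zero_add]

lemma Lagrange.sum_nodalWeight_mul_pow_succ {r : ℕ} {x : Fin (r + 1) → F}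
    (hx : Function.Injective x) (k : ℕ) :
    ∑ l, nodalWeight univ x l * x l ^ (k + 1) =
      x 0 * ∑ l, nodalWeight univ x l * x l ^ k +
        ∑ l, nodalWeight univ (Fin.tail x) l * Fin.tail x l ^ k := by
  have hrest : ∑ l, nodalWeight univ x l * (x l - x 0) * x l ^ k =
      ∑ l, nodalWeight univ (Fin.tail x) l * Fin.tail x l ^ k := by
    rw [Fin.sum_univ_succ, sub_self, mul_zero, zero_mul, zero_add]
    refine sum_congr rfl fun l _ => ?_
    rw [nodalWeight_univ_succ, mul_comm (x l.succ - x 0)⁻¹,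
      inv_mul_cancel_right₀ (sub_ne_zero.mpr (hx.ne (Fin.succ_ne_zero l)))]
    rfl
  rw [← hrest, mul_sum, ← sum_add_distrib]
  exact sum_congr rfl fun l _ => by ring

theorem Lagrange.sum_nodalWeight_mul_pow {r : ℕ} {x : Fin r → F} (hx : Function.Injective x)
    (k : ℕ) :
    ∑ l, nodalWeight univ x l * x l ^ k = if r ≤ k + 1 then hsym r (k + 1 - r) x else 0 := by
  induction r generalizing k with
  | zero => simp
  | succ r ihr =>
    induction k with
    | zero => simp [sum_nodalWeight hx.injOn univ_nonempty]
    | succ k ihk =>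
      rw [sum_nodalWeight_mul_pow_succ hx, ihk,
        ihr (x := Fin.tail x) (hx.comp (Fin.succ_injective r)) k]
      rcases lt_trichotomy r (k + 1) with h | h | h
      · obtain ⟨d, rfl⟩ : ∃ d, k = r + d := ⟨k - r, by omega⟩
        rw [if_pos (by omega), if_pos (by omega), if_pos (by omega),
          show r + d + 1 + 1 - (r + 1) = d + 1 by omega, show r + d + 1 - (r + 1) = d by omega,
          show r + d + 1 - r = d + 1 by omega, hsym_succ_succ]
      · subst h
        simp
      · rw [if_neg (by omega), if_neg (by omega), if_neg (by omega), mul_zero, zero_add]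

theorem hasSum_ite_hsym_mul [TopologicalSpace F] [IsTopologicalRing F] {r : ℕ} {x : Fin r → F}
    (hx : Function.Injective x) {g : ℕ → F} {G : Fin r → F}
    (hG : ∀ a, HasSum (fun k => x a ^ k * g k) (G a)) :
    HasSum (fun k => (if r ≤ k + 1 then hsym r (k + 1 - r) x else 0) * g k)
      (∑ a, nodalWeight univ x a * G a) := by
  simp only [← sum_nodalWeight_mul_pow hx, sum_mul, mul_assoc]
  exact hasSum_sum fun a _ => (hG a).mul_left _

end NodalWeight

def uturnKernel {F : Type*} [Field F] (t x y : F) : F :=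
  (1 - t) / ((1 - x * y) * (1 - t * (x * y)) * (1 - x * y⁻¹) * (1 - t * (x * y⁻¹)))

section Geometric

variable {𝕜 : Type*} [NormedField 𝕜]

theorem hasSum_geometric_uturn {x y u t : 𝕜} (hxy : ‖x * y‖ < 1) (hxu : ‖x * u‖ < 1)
    (ht : ‖t‖ ≤ 1) (hyu : y ≠ u) :
    HasSum (fun k => x ^ k * ((1 - t ^ (k + 1)) * ((y ^ (k + 1) - u ^ (k + 1)) / (y - u))))
      ((1 - t) * (1 - t * x ^ 2 * (y * u)) /
        ((1 - x * y) * (1 - t * (x * y)) * (1 - x * u) * (1 - t * (x * u)))) := by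
  have htxy : ‖t * (x * y)‖ < 1 := by
    rw [norm_mul]; exact lt_of_le_of_lt (mul_le_of_le_one_left (norm_nonneg _) ht) hxy
  have htxu : ‖t * (x * u)‖ < 1 := by
    rw [norm_mul]; exact lt_of_le_of_lt (mul_le_of_le_one_left (norm_nonneg _) ht) hxu
  have hsum := (((hasSum_geometric_of_norm_lt_one hxy).mul_left y).sub
    ((hasSum_geometric_of_norm_lt_one hxu).mul_left u)).sub
    (((hasSum_geometric_of_norm_lt_one htxy).mul_left (t * y)).sub
    ((hasSum_geometric_of_norm_lt_one htxu).mul_left (t * u))) |>.div_const (y - u)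
  have hxy₀ := (isUnit_one_sub_of_norm_lt_one hxy).ne_zero
  have hxu₀ := (isUnit_one_sub_of_norm_lt_one hxu).ne_zero
  have htxy₀ : 1 - t * x * y ≠ 0 :=
    mul_assoc t x y ▸ (isUnit_one_sub_of_norm_lt_one htxy).ne_zero
  have htxu₀ : 1 - t * x * u ≠ 0 :=
    mul_assoc t x u ▸ (isUnit_one_sub_of_norm_lt_one htxu).ne_zero
  have hyu₀ := sub_ne_zero.mpr hyu
  convert hsum using 1
  · funext k
    field_simp
    ring
  · field_simp
    ring

theorem hasSum_uturnKernel {x y t : 𝕜} (hxy : ‖x * y‖ < 1) (hxy' : ‖x * y⁻¹‖ < 1)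
    (ht : ‖t‖ ≤ 1) (hy : y ≠ y⁻¹) :
    HasSum
      (fun k => x ^ k * ((1 - t ^ (k + 1)) * ((y ^ (k + 1) - y⁻¹ ^ (k + 1)) / (y - y⁻¹))))
      ((1 - t * x ^ 2) * uturnKernel t x y) := by
  have hy0 : y ≠ 0 := fun h => hy (by simp [h])
  convert hasSum_geometric_uturn hxy hxy' ht hy using 1
  rw [mul_inv_cancel₀ hy0, mul_one, uturnKernel, mul_div_assoc', mul_comm (1 - t * x ^ 2)]

end Geometric

def Fin.iciEmb {n : ℕ} (i : Fin n) : Fin (n - i) ↪ Fin n :=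
  ⟨fun a => ⟨i + a, by omega⟩, fun a b h => Fin.ext (by simpa using congrArg Fin.val h)⟩

@[simp]
lemma Fin.val_iciEmb {n : ℕ} (i : Fin n) (a : Fin (n - i)) : (i.iciEmb a : ℕ) = i + a := rfl

lemma Fin.map_iciEmb_univ {n : ℕ} (i : Fin n) : univ.map i.iciEmb = Ici i := by
  ext l
  simp only [mem_map, mem_univ, true_and, mem_Ici]
  constructor
  · rintro ⟨a, rfl⟩
    exact Fin.le_def.mpr (by simp)
  · intro h
    exact ⟨⟨l - i, by omega⟩, Fin.ext (by simp; omega)⟩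

section NodalWeightMatrix

variable {F : Type*} [Field F] {n : ℕ}

def nodalWeightMatrix (m : ℕ) (x : Fin n → F) : Matrix (Fin n) (Fin n) F :=
  Matrix.of fun i l =>
    if (i : ℕ) < m then (1 : Matrix (Fin n) (Fin n) F) i l
    else if l ∈ Ici i then nodalWeight (Ici i) x l else 0

lemma isUpperTriangular_nodalWeightMatrix (m : ℕ) (x : Fin n → F) :
    (nodalWeightMatrix m x).IsUpperTriangular := by
  intro i l (hli : l < i)
  simp only [nodalWeightMatrix, Matrix.of_apply, Matrix.one_apply_ne hli.ne', mem_Ici,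
    not_le.mpr hli, ite_false, ite_self]

lemma det_nodalWeightMatrix (m : ℕ) (x : Fin n → F) :
    (nodalWeightMatrix m x).det =
      (∏ i : Fin n, ∏ j ∈ Ioi i, if m ≤ (i : ℕ) then x i - x j else 1)⁻¹ := by
  rw [Matrix.det_of_isUpperTriangular (isUpperTriangular_nodalWeightMatrix m x),
    ← prod_inv_distrib]
  refine prod_congr rfl fun i _ => ?_
  by_cases hi : (i : ℕ) < m
  · simp [nodalWeightMatrix, hi, not_le.mpr hi]
  · simp [nodalWeightMatrix, hi, not_lt.mp hi, nodalWeight, Ici_erase]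

lemma prod_Ioi_ite_sub_eq_zero_iff (m : ℕ) (x : Fin n → F) :
    (∏ i : Fin n, ∏ j ∈ Ioi i, if m ≤ (i : ℕ) then x i - x j else 1) = 0 ↔
      ¬ Set.InjOn x {i | m ≤ (i : ℕ)} := by
  simp only [prod_eq_zero_iff, mem_univ, true_and, mem_Ioi, ite_eq_iff, sub_eq_zero,
    one_ne_zero, and_false, or_false, Set.InjOn, Set.mem_ofPred_eq, not_forall]
  constructor
  · rintro ⟨i, j, hij, hi, hx⟩
    exact ⟨i, hi, j, le_trans hi (Fin.le_def.mp hij.le), hx, hij.ne⟩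
  · rintro ⟨i, hi, j, hj, hx, hij⟩
    rcases lt_or_gt_of_ne hij with h | h
    · exact ⟨i, j, h, hi, hx⟩
    · exact ⟨j, i, h, hj, hx.symm⟩

end NodalWeightMatrix

section UTurn

variable {𝕜 : Type*} [NormedField 𝕜] {n : ℕ}

def uturnSeries (t : 𝕜) (x : Fin n → 𝕜) (y : 𝕜) (i : Fin n) : 𝕜 :=
  ∑' k : ℕ, if n ≤ k + (i : ℕ) + 1 then
    (1 - t ^ (k + 1)) * hsym (n - (i : ℕ)) (k + (i : ℕ) + 1 - n) (x ∘ i.iciEmb) *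
      ((y ^ (k + 1) - y⁻¹ ^ (k + 1)) / (y - y⁻¹))
  else 0

theorem uturnSeries_eq_sum_nodalWeight {t : 𝕜} {x : Fin n → 𝕜} {y : 𝕜} {i : Fin n}
    (hx : Set.InjOn x (Ici i)) (hxy : ∀ l, ‖x l * y‖ < 1) (hxy' : ∀ l, ‖x l * y⁻¹‖ < 1)
    (ht : ‖t‖ ≤ 1) (hy : y ≠ y⁻¹) :
    uturnSeries t x y i =
      ∑ l ∈ Ici i, nodalWeight (Ici i) x l * ((1 - t * x l ^ 2) * uturnKernel t (x l) y) := by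
  have hmem : ∀ a, i.iciEmb a ∈ Ici i := fun a =>
    i.map_iciEmb_univ ▸ mem_map_of_mem _ (mem_univ a)
  have hinj : Function.Injective (x ∘ i.iciEmb) := fun a b h =>
    i.iciEmb.injective (hx (hmem a) (hmem b) h)
  have hsum := hasSum_ite_hsym_mul hinj fun a => hasSum_uturnKernel (hxy (i.iciEmb a))
    (hxy' (i.iciEmb a)) ht hy
  rw [← i.map_iciEmb_univ, sum_map]
  simp only [nodalWeight_map]
  refine HasSum.tsum_eq (hsum.congr_fun fun k => ?_)
  have := i.isLt
  by_cases hk : n ≤ k + (i : ℕ) + 1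
  · rw [if_pos hk, if_pos (by omega), show k + 1 - (n - i) = k + i + 1 - n by omega]
    ring
  · rw [if_neg hk, if_neg (by omega), zero_mul]

def uturnMatrix (m : ℕ) (t : 𝕜) (x y : Fin n → 𝕜) : Matrix (Fin n) (Fin n) 𝕜 :=
  Matrix.of fun i j =>
    if (i : ℕ) < m then uturnKernel t (x i) (y j) else uturnSeries t x (y j) i

theorem uturnMatrix_eq_mul {m : ℕ} {t : 𝕜} {x y : Fin n → 𝕜}
    (hx : Set.InjOn x {i | m ≤ (i : ℕ)}) (hxy : ∀ i j, ‖x i * y j‖ < 1)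
    (hxy' : ∀ i j, ‖x i * (y j)⁻¹‖ < 1) (ht : ‖t‖ ≤ 1)
    (hy : ∀ j, y j ≠ (y j)⁻¹) :
    uturnMatrix m t x y = nodalWeightMatrix m x *
      (Matrix.diagonal (fun i : Fin n => if (i : ℕ) < m then 1 else 1 - t * x i ^ 2) *
        Matrix.of fun i j => uturnKernel t (x i) (y j)) := by
  ext i j
  rw [Matrix.mul_apply]
  simp only [uturnMatrix, nodalWeightMatrix, Matrix.diagonal_mul, Matrix.of_apply]
  by_cases hi : (i : ℕ) < m
  · rw [Fintype.sum_eq_single i fun l hl => by simp [hi, Matrix.one_apply_ne hl.symm]]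
    simp [hi]
  · have hIci : (Ici i : Set (Fin n)) ⊆ {l | m ≤ (l : ℕ)} := fun l hl =>
      le_trans (not_lt.mp hi) (Fin.le_def.mp (mem_Ici.mp hl))
    rw [if_neg hi,
      uturnSeries_eq_sum_nodalWeight (hx.mono hIci) (hxy · j) (hxy' · j) ht (hy j)]
    simp only [hi, ite_false, ite_mul, zero_mul, sum_ite_mem, univ_inter]
    refine sum_congr rfl fun l hl => ?_
    rw [if_neg (not_lt.mpr (hIci hl))]

theorem det_uturnKernel {m : ℕ} {t : 𝕜} {x y : Fin n → 𝕜}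
    (hxy : ∀ i j, ‖x i * y j‖ < 1) (hxy' : ∀ i j, ‖x i * (y j)⁻¹‖ < 1) (ht : ‖t‖ ≤ 1)
    (hy : ∀ j, y j ≠ (y j)⁻¹) (hd : ∀ i : Fin n, m ≤ (i : ℕ) → 1 - t * x i ^ 2 ≠ 0) :
    (Matrix.of fun i j => uturnKernel t (x i) (y j)).det =
      (∏ i : Fin n, ∏ j ∈ Ioi i, if m ≤ (i : ℕ) then x i - x j else 1) /
        (∏ i ∈ univ.filter (fun i : Fin n => m ≤ (i : ℕ)), (1 - t * x i ^ 2)) *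
          (uturnMatrix m t x y).det := by
  by_cases hinj : Set.InjOn x {i | m ≤ (i : ℕ)}
  · have hV := mt (prod_Ioi_ite_sub_eq_zero_iff m x).mp (not_not.mpr hinj)
    have hP : ∏ i ∈ univ.filter (fun i : Fin n => m ≤ (i : ℕ)), (1 - t * x i ^ 2) ≠ 0 :=
      prod_ne_zero_iff.mpr fun i hi => hd i (mem_filter.mp hi).2
    rw [uturnMatrix_eq_mul hinj hxy hxy' ht hy, Matrix.det_mul, Matrix.det_mul,
      Matrix.det_diagonal, det_nodalWeightMatrix, prod_ite, prod_const_one, one_mul]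
    simp only [not_lt]
    field_simp
  · rw [(prod_Ioi_ite_sub_eq_zero_iff m x).mpr hinj, zero_div, zero_mul]
    simp only [Set.InjOn, not_forall] at hinj
    obtain ⟨i, -, j, -, hij, hne⟩ := hinj
    exact Matrix.det_zero_of_row_eq hne (funext fun l => by simp [hij])

end UTurn

/-- Row-operation form of the Tsuchiya determinant: for `0 ≤ m < n` and `ȳ = y⁻¹`,
`det[(1-t)/((1-xᵢyⱼ)(1-t xᵢyⱼ)(1-xᵢȳⱼ)(1-t xᵢȳⱼ))]
  = (∏_{m+1≤i<j≤n} (xᵢ-xⱼ) / ∏_{i=m+1}^n (1-t xᵢ²)) · det[𝒰_{ij}]`,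
where `𝒰_{ij} = (1-t)/((1-xᵢyⱼ)(1-t xᵢyⱼ)(1-xᵢȳⱼ)(1-t xᵢȳⱼ))` for `i ≤ m` and
`𝒰_{ij} = Σ_{k≥0} (1-t^{k+1}) h_{k+i-n}(xᵢ,…,xₙ) (yⱼ^{k+1}-ȳⱼ^{k+1})/(yⱼ-ȳⱼ)` for `i > m`
(with `h_d = 0` for `d < 0`).  It is stated here for complex values of the variables in a
domain of convergence. -/
theorem det_row_operations_uturn (m n : ℕ) (x y : Fin n → ℂ) (t : ℂ)
    (hx : ∀ i, ‖x i‖ < 1 / 8) (hy1 : ∀ j, 1 / 2 < ‖y j‖) (hy2 : ∀ j, ‖y j‖ < 2)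
    (hysq : ∀ j, (y j) ^ 2 ≠ 1) (ht : ‖t‖ < 1) :
    (Matrix.of fun i j : Fin n =>
        (1 - t) / ((1 - x i * y j) * (1 - t * (x i * y j)) *
          (1 - x i * (y j)⁻¹) * (1 - t * (x i * (y j)⁻¹)))).det =
      (∏ i : Fin n, ∏ j ∈ Finset.Ioi i, if m ≤ (i : ℕ) then x i - x j else 1) /
          (∏ i ∈ Finset.univ.filter (fun i : Fin n => m ≤ (i : ℕ)), (1 - t * x i ^ 2)) *
        (Matrix.of fun i j : Fin n =>
          if (i : ℕ) < m then
            (1 - t) / ((1 - x i * y j) * (1 - t * (x i * y j)) *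
              (1 - x i * (y j)⁻¹) * (1 - t * (x i * (y j)⁻¹)))
          else
            ∑' k : ℕ,
              if n ≤ k + (i : ℕ) + 1 then
                (1 - t ^ (k + 1)) *
                  hsym (n - (i : ℕ)) (k + (i : ℕ) + 1 - n)
                    (fun a : Fin (n - (i : ℕ)) =>
                      x ⟨(i : ℕ) + (a : ℕ), by have h1 := a.isLt; have h2 := i.isLt; omega⟩) *
                  ((y j ^ (k + 1) - (y j)⁻¹ ^ (k + 1)) / (y j - (y j)⁻¹))
              else 0).det := by
  have hy0 : ∀ j, y j ≠ 0 := fun j h => by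
    have := hy1 j
    rw [h, norm_zero] at this
    norm_num at this
  have hyinv : ∀ j, ‖(y j)⁻¹‖ < 2 := fun j => by
    rw [norm_inv]; exact inv_lt_of_inv_lt₀ (by norm_num) (by simpa using hy1 j)
  have hxy : ∀ i j, ‖x i * y j‖ < 1 := fun i j => by
    rw [norm_mul]; nlinarith [hx i, hy2 j, norm_nonneg (x i), norm_nonneg (y j)]
  have hxy' : ∀ i j, ‖x i * (y j)⁻¹‖ < 1 := fun i j => by
    rw [norm_mul]; nlinarith [hx i, hyinv j, norm_nonneg (x i), norm_nonneg (y j)⁻¹]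
  have hyy : ∀ j, y j ≠ (y j)⁻¹ := fun j h =>
    hysq j (by rw [sq]; nth_rw 2 [h]; exact mul_inv_cancel₀ (hy0 j))
  have htx : ∀ i, ‖t * x i ^ 2‖ < 1 := fun i => by
    rw [norm_mul, norm_pow]; nlinarith [hx i, ht, norm_nonneg (x i), norm_nonneg t]
  exact det_uturnKernel hxy hxy' ht.le hyy fun i _ =>
    (isUnit_one_sub_of_norm_lt_one (htx i)).ne_zero
end
end
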